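/- arXiv:2303.06992 — 5 statements merged into one kernel-verified Lean document; each statement's English description precedes it below -/
import Mathlib

section
/- (IBAL is the limiting behavior of the GIWAE lower bound as K → ∞.) Suppose in addition that the critic T : X × Z → ℝ is bounded and measurable. Then lim_{K → ∞} I_GIWAE_L(q,T,K) = IBAL(q,T). -/
open MeasureTheory Real Filter

noncomputable section

namespace Stmt14

private lemma log_taylor_bound {a b c : ℝ} (hc : 0 < c) (ha : c ≤ a) (hb : c ≤ b) :
    |Real.log a - Real.log b - (a - b) / b| ≤ (a - b) ^ 2 / c ^ 2 := by
  have ha0 : 0 < a := hc.trans_le ha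
  have hb0 : 0 < b := hc.trans_le hb
  have h1 : Real.log a - Real.log b ≤ a / b - 1 := by
    have := Real.log_le_sub_one_of_pos (x := a / b) (by positivity)
    rwa [Real.log_div ha0.ne' hb0.ne'] at this
  have h2 : Real.log b - Real.log a ≤ b / a - 1 := by
    have := Real.log_le_sub_one_of_pos (x := b / a) (by positivity)
    rwa [Real.log_div hb0.ne' ha0.ne'] at this
  rw [abs_le]
  constructor
  · have hab : c ^ 2 ≤ a * b := by nlinarith
    have key : (a - b) ^ 2 / (a * b) ≤ (a - b) ^ 2 / c ^ 2 := by
      rw [div_le_div_iff₀ (by positivity) (by positivity)]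
      exact mul_le_mul_of_nonneg_left hab (sq_nonneg _)
    have e2 : (a - b) / a = 1 - b / a := by field_simp
    have h2' : (a - b) / a ≤ Real.log a - Real.log b := by linarith
    have h4 : (a - b) / a - (a - b) / b = -((a - b) ^ 2 / (a * b)) := by
      field_simp
      ring
    linarith
  · have e1 : a / b - 1 - (a - b) / b = 0 := by field_simp; ring
    have h5 : Real.log a - Real.log b - (a - b) / b ≤ 0 := by linarith
    have h6 : (0:ℝ) ≤ (a - b) ^ 2 / c ^ 2 := by positivity
    linarith

private lemma pi_integrable {Z : Type*} [MeasurableSpace Z] {K : ℕ} {μ : Measure Z}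
    [SigmaFinite μ] {f : Fin K → Z → ℝ} (hf : ∀ i, Integrable (f i) μ) :
    Integrable (fun z : Fin K → Z => ∏ i, f i (z i)) (Measure.pi fun _ => μ) := by
  letI : MeasureSpace Z := ⟨μ⟩
  haveI : SigmaFinite (volume : Measure Z) := ‹SigmaFinite μ›
  exact MeasureTheory.Integrable.fintype_prod (𝕜 := ℝ) (f := f) hf

private lemma pi_integral {Z : Type*} [MeasurableSpace Z] {K : ℕ} {μ : Measure Z}
    [SigmaFinite μ] (f : Fin K → Z → ℝ) :
    ∫ z : Fin K → Z, ∏ i, f i (z i) ∂(Measure.pi fun _ => μ) = ∏ i, ∫ z, f i z ∂μ := by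
  letI : MeasureSpace Z := ⟨μ⟩
  haveI : SigmaFinite (volume : Measure Z) := ‹SigmaFinite μ›
  exact MeasureTheory.integral_fintype_prod_eq_prod (ι := Fin K) f

private lemma ae_eval {Z : Type*} [MeasurableSpace Z] {K : ℕ} {μ : Measure Z} [SigmaFinite μ]
    {P : Z → Prop} (h : ∀ᵐ w ∂μ, P w) (i : Fin K) :
    ∀ᵐ z ∂(Measure.pi fun _ : Fin K => μ), P (z i) := by
  rw [ae_iff] at h ⊢
  set N := toMeasurable μ {w | ¬ P w} with hN
  have hsub : {z : Fin K → Z | ¬ P (z i)} ⊆ (fun z : Fin K → Z => z i) ⁻¹' N :=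
    fun z hz => subset_toMeasurable _ _ hz
  refine measure_mono_null hsub ?_
  have heq : (fun z : Fin K → Z => z i) ⁻¹' N
      = Set.pi Set.univ (fun j => if j = i then N else Set.univ) := by
    ext z
    simp only [Set.mem_preimage, Set.mem_pi, Set.mem_univ, forall_true_left]
    constructor
    · intro hz j
      by_cases hj : j = i
      · subst hj; simp [hz]
      · simp [hj]
    · intro hz
      have := hz i
      simpa using this
  rw [heq, Measure.pi_pi]
  refine Finset.prod_eq_zero (Finset.mem_univ i) ?_
  simp [hN, measure_toMeasurable, h]

private lemma integrable_mul_of_bdd {α : Type*} [MeasurableSpace α] {μ : Measure α}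
    {w u : α → ℝ} {B : ℝ} (hw : Integrable w μ) (hu : Measurable u) (hub : ∀ z, |u z| ≤ B) :
    Integrable (fun z => w z * u z) μ := by
  have := hw.bdd_mul hu.aestronglyMeasurable (c := B) (Filter.Eventually.of_forall fun z => by simpa [Real.norm_eq_abs] using hub z)
  simpa [mul_comm] using this

private lemma pos_integral_of_ae_pos {α : Type*} [MeasurableSpace α] {μ : Measure α}
    (hμ : μ ≠ 0) {f : α → ℝ} (hf : ∀ᵐ z ∂μ, 0 < f z) (hfi : Integrable f μ) :
    0 < ∫ z, f z ∂μ := by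
  refine (integral_pos_iff_support_of_nonneg_ae (hf.mono fun z hz => hz.le) hfi).2 ?_
  have hcompl : μ (Function.support f)ᶜ = 0 := by
    refine measure_mono_null ?_ (ae_iff.1 hf)
    intro z hz
    simp only [Set.mem_compl_iff, Function.mem_support, not_not] at hz
    simp [hz]
  by_contra hle
  push_neg at hle
  have h0 : μ (Function.support f) = 0 := le_antisymm hle bot_le
  have huniv : μ Set.univ = 0 := by
    have := measure_union_le (μ := μ) (Function.support f) (Function.support f)ᶜ
    simpa [Set.union_compl_self, hcompl, h0] using this
  exact hμ (by rwa [← Measure.measure_univ_eq_zero])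


set_option maxHeartbeats 1000000 in
private lemma key_estimate {Z : Type*} [MeasurableSpace Z] (μ : Measure Z) [SigmaFinite μ]
    (K : ℕ) [NeZero K] (g h t : Z → ℝ) (C : ℝ) (hC : 0 ≤ C)
    (hg_meas : Measurable g) (hh_meas : Measurable h) (ht_meas : Measurable t)
    (hg0 : 0 ≤ᵐ[μ] g) (hh0 : 0 ≤ᵐ[μ] h)
    (hgi : Integrable g μ) (hhi : Integrable h μ)
    (hgn : ∫ z, g z ∂μ = 1) (hhn : ∫ z, h z ∂μ = 1)
    (htb : ∀ z, |t z| ≤ C)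
    (hhe : Integrable (fun z => h z * exp (t z)) μ) :
    |(∫ z : Fin K → Z,
        g (z 0) * (∏ k ∈ Finset.univ.erase (0 : Fin K), h (z k)) *
          log (exp (t (z 0)) / ((1 / (K : ℝ)) * ∑ k, exp (t (z k))))
        ∂(Measure.pi fun _ : Fin K => μ))
      - ((∫ z, g z * t z ∂μ) - log (∫ z, h z * exp (t z) ∂μ))|
      ≤ (exp C ^ 2 + exp C ^ 4) / K := by
  have hK0 : 0 < (K : ℝ) := by exact_mod_cast Nat.pos_of_ne_zero (NeZero.ne K)
  set μK := (Measure.pi fun _ : Fin K => μ) with hμK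
  have hc_pos : (0:ℝ) < exp (-C) := exp_pos _
  have hflb : ∀ z, exp (-C) ≤ exp (t z) := fun z => exp_le_exp.2 (by linarith [(abs_le.1 (htb z)).1])
  have hfub : ∀ z, exp (t z) ≤ exp C := fun z => exp_le_exp.2 (by linarith [(abs_le.1 (htb z)).2])
  have hf_meas : Measurable fun z => exp (t z) := Real.measurable_exp.comp ht_meas
  set m := ∫ z, h z * exp (t z) ∂μ with hm
  -- bounds on m
  have hml : exp (-C) ≤ m := by
    have h1 : ∫ z, h z * exp (-C) ∂μ ≤ m :=
      integral_mono_ae (hhi.mul_const _) hhe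
        (hh0.mono fun z hz => mul_le_mul_of_nonneg_left (hflb z) hz)
    rwa [integral_mul_const, hhn, one_mul] at h1
  have hmu : m ≤ exp C := by
    have h1 : m ≤ ∫ z, h z * exp C ∂μ :=
      integral_mono_ae hhe (hhi.mul_const _)
        (hh0.mono fun z hz => mul_le_mul_of_nonneg_left (hfub z) hz)
    rwa [integral_mul_const, hhn, one_mul] at h1
  have hm_pos : 0 < m := lt_of_lt_of_le hc_pos hml
  -- g * exp t
  have hge_int : Integrable (fun z => g z * exp (t z)) μ :=
    integrable_mul_of_bdd hgi hf_meas (fun z => by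
      rw [abs_of_pos (exp_pos _)]; exact hfub z)
  have hgel : exp (-C) ≤ ∫ z, g z * exp (t z) ∂μ := by
    have h1 : ∫ z, g z * exp (-C) ∂μ ≤ _ :=
      integral_mono_ae (hgi.mul_const _) hge_int
        (hg0.mono fun z hz => mul_le_mul_of_nonneg_left (hflb z) hz)
    rwa [integral_mul_const, hgn, one_mul] at h1
  have hgeu : ∫ z, g z * exp (t z) ∂μ ≤ exp C := by
    have h1 : _ ≤ ∫ z, g z * exp C ∂μ :=
      integral_mono_ae hge_int (hgi.mul_const _)
        (hg0.mono fun z hz => mul_le_mul_of_nonneg_left (hfub z) hz)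
    rwa [integral_mul_const, hgn, one_mul] at h1
  -- the densities
  set ψ : Fin K → Z → ℝ := fun k => if k = 0 then g else h with hψdef
  have hψ_eq0 : ψ 0 = g := by simp [hψdef]
  have hψ_eqne : ∀ k : Fin K, k ≠ 0 → ψ k = h := fun k hk => by simp [hψdef, hk]
  have hψ_meas : ∀ k, Measurable (ψ k) := by
    intro k
    rcases eq_or_ne k 0 with hk | hk
    · rw [hk, hψ_eq0]; exact hg_meas
    · rw [hψ_eqne k hk]; exact hh_meas
  have hψ0 : ∀ k, 0 ≤ᵐ[μ] ψ k := by
    intro k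
    rcases eq_or_ne k 0 with hk | hk
    · rw [hk, hψ_eq0]; exact hg0
    · rw [hψ_eqne k hk]; exact hh0
  have hψ_int : ∀ k, Integrable (ψ k) μ := by
    intro k
    rcases eq_or_ne k 0 with hk | hk
    · rw [hk, hψ_eq0]; exact hgi
    · rw [hψ_eqne k hk]; exact hhi
  have hψ_norm : ∀ k, ∫ z, ψ k z ∂μ = 1 := by
    intro k
    rcases eq_or_ne k 0 with hk | hk
    · rw [hk, hψ_eq0]; exact hgn
    · rw [hψ_eqne k hk]; exact hhn
  have hψe_int : ∀ k, Integrable (fun z => ψ k z * exp (t z)) μ := by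
    intro k
    rcases eq_or_ne k 0 with hk | hk
    · rw [hk, hψ_eq0]; exact hge_int
    · rw [hψ_eqne k hk]; exact hhe
  have hψe_val : ∀ k, ∫ z, ψ k z * exp (t z) ∂μ
      = if k = 0 then ∫ z, g z * exp (t z) ∂μ else m := by
    intro k
    rcases eq_or_ne k 0 with hk | hk
    · rw [hk, hψ_eq0, if_pos rfl]
    · rw [hψ_eqne k hk, if_neg hk, hm]
  -- v
  set v : Z → ℝ := fun z => exp (t z) - m with hvdef
  have hv_meas : Measurable v := hf_meas.sub measurable_const
  have hv_bdd : ∀ z, |v z| ≤ exp C := by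
    intro z
    rw [abs_le]
    constructor
    · simp only [hvdef]; linarith [hflb z]
    · simp only [hvdef]; linarith [hfub z, hc_pos]
  have hψv_int : ∀ k, Integrable (fun z => ψ k z * v z) μ := by
    intro k
    have := (hψe_int k).sub ((hψ_int k).mul_const m)
    refine this.congr ?_
    filter_upwards with z
    simp only [Pi.sub_apply, hvdef]
    ring
  have hψv_val : ∀ k, ∫ z, ψ k z * v z ∂μ
      = if k = 0 then (∫ z, g z * exp (t z) ∂μ) - m else 0 := by
    intro k
    have e1 : ∫ z, ψ k z * v z ∂μ
        = (∫ z, ψ k z * exp (t z) ∂μ) - m * ∫ z, ψ k z ∂μ := by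
      rw [← integral_const_mul, ← integral_sub (hψe_int k) ((hψ_int k).const_mul m)]
      refine integral_congr_ae ?_
      filter_upwards with z
      simp only [hvdef]
      ring
    rw [e1, hψ_norm k, mul_one, hψe_val k]
    by_cases hk : k = 0 <;> simp [hk]
  have hψvv_int : ∀ k, Integrable (fun z => ψ k z * (v z * v z)) μ :=
    fun k => integrable_mul_of_bdd (hψ_int k) (hv_meas.mul hv_meas)
      (fun z => by
        rw [abs_mul]
        calc |v z| * |v z| ≤ exp C * exp C :=
              mul_le_mul (hv_bdd z) (hv_bdd z) (abs_nonneg _) (exp_pos _).le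
          _ = exp C ^ 2 := by ring)
  have hψvv_le : ∀ k, ∫ z, ψ k z * (v z * v z) ∂μ ≤ exp C ^ 2 := by
    intro k
    have h1 : ∫ z, ψ k z * (v z * v z) ∂μ ≤ ∫ z, ψ k z * exp C ^ 2 ∂μ := by
      refine integral_mono_ae (hψvv_int k) ((hψ_int k).mul_const _) ?_
      filter_upwards [hψ0 k] with z hz
      refine mul_le_mul_of_nonneg_left ?_ hz
      calc v z * v z = |v z| * |v z| := (abs_mul_abs_self _).symm
        _ ≤ exp C * exp C :=
            mul_le_mul (hv_bdd z) (hv_bdd z) (abs_nonneg _) (exp_pos _).le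
        _ = exp C ^ 2 := by ring
    rwa [integral_mul_const, hψ_norm k, one_mul] at h1
  -- D
  set D : (Fin K → Z) → ℝ := fun z => ∏ i, ψ i (z i) with hDdef
  have hD_meas : Measurable D :=
    Finset.measurable_prod _ fun i _ => (hψ_meas i).comp (measurable_pi_apply i)
  have hD_int : Integrable D μK := pi_integrable hψ_int
  have hD_norm : ∫ z, D z ∂μK = 1 := by
    rw [hDdef, hμK, pi_integral]
    exact Finset.prod_eq_one fun i _ => hψ_norm i
  have hD0 : 0 ≤ᵐ[μK] D := by
    have h1 : ∀ᵐ z ∂μK, ∀ i : Fin K, 0 ≤ ψ i (z i) :=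
      (ae_all_iff).2 fun i => ae_eval (hψ0 i) i
    filter_upwards [h1] with z hz
    exact Finset.prod_nonneg fun i _ => hz i
  -- key1
  have key1 : ∀ (j : Fin K) (u : Z → ℝ), Integrable (fun z => ψ j z * u z) μ →
      Integrable (fun z : Fin K → Z => D z * u (z j)) μK ∧
      ∫ z, D z * u (z j) ∂μK = ∫ z, ψ j z * u z ∂μ := by
    intro j u hu
    set φ : Fin K → Z → ℝ := Function.update ψ j (fun z => ψ j z * u z) with hφdef
    have hφ_int : ∀ i, Integrable (φ i) μ := by
      intro i
      by_cases hi : i = j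
      · subst hi; rw [hφdef, Function.update_self]; exact hu
      · rw [hφdef, Function.update_of_ne hi]; exact hψ_int i
    have hrw : ∀ z : Fin K → Z, D z * u (z j) = ∏ i, φ i (z i) := by
      intro z
      have e1 : D z = ψ j (z j) * ∏ i ∈ Finset.univ.erase j, ψ i (z i) := by
        simp only [hDdef]
        rw [← Finset.mul_prod_erase Finset.univ _ (Finset.mem_univ j)]
      have e2 : ∏ i, φ i (z i) = φ j (z j) * ∏ i ∈ Finset.univ.erase j, φ i (z i) :=
        (Finset.mul_prod_erase Finset.univ _ (Finset.mem_univ j)).symm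
      have e3 : ∏ i ∈ Finset.univ.erase j, φ i (z i)
          = ∏ i ∈ Finset.univ.erase j, ψ i (z i) :=
        Finset.prod_congr rfl fun i hi => by
          rw [hφdef, Function.update_of_ne (Finset.ne_of_mem_erase hi)]
      have hφj : φ j = fun z => ψ j z * u z := by
        rw [hφdef, Function.update_self]
      rw [e1, e2, e3]
      simp only [hφj]
      ring
    constructor
    · rw [show (fun z : Fin K → Z => D z * u (z j)) = fun z => ∏ i, φ i (z i) from
        funext hrw]
      exact pi_integrable hφ_int
    · rw [show (fun z : Fin K → Z => D z * u (z j)) = fun z => ∏ i, φ i (z i) from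
        funext hrw, hμK, pi_integral, ← Finset.mul_prod_erase Finset.univ _ (Finset.mem_univ j)]
      have e4 : ∏ i ∈ Finset.univ.erase j, ∫ z, φ i z ∂μ = 1 :=
        Finset.prod_eq_one fun i hi => by
          rw [hφdef, Function.update_of_ne (Finset.ne_of_mem_erase hi)]; exact hψ_norm i
      have hφj : φ j = fun z => ψ j z * u z := by
        rw [hφdef, Function.update_self]
      rw [e4, mul_one]
      simp only [hφj]
  -- key2
  have key2 : ∀ (j k : Fin K), j ≠ k → ∀ (u w : Z → ℝ),
      Integrable (fun z => ψ j z * u z) μ → Integrable (fun z => ψ k z * w z) μ →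
      Integrable (fun z : Fin K → Z => D z * (u (z j) * w (z k))) μK ∧
      ∫ z, D z * (u (z j) * w (z k)) ∂μK
        = (∫ z, ψ j z * u z ∂μ) * (∫ z, ψ k z * w z ∂μ) := by
    intro j k hjk u w hu hw
    set φ : Fin K → Z → ℝ :=
      Function.update (Function.update ψ j (fun z => ψ j z * u z)) k
        (fun z => ψ k z * w z) with hφdef
    have hφj : φ j = fun z => ψ j z * u z := by
      rw [hφdef, Function.update_of_ne hjk, Function.update_self]
    have hφk : φ k = fun z => ψ k z * w z := by
      rw [hφdef, Function.update_self]
    have hφother : ∀ i, i ≠ j → i ≠ k → φ i = ψ i := by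
      intro i hij hik
      rw [hφdef, Function.update_of_ne hik, Function.update_of_ne hij]
    have hφ_int : ∀ i, Integrable (φ i) μ := by
      intro i
      by_cases hik : i = k
      · subst hik; rw [hφk]; exact hw
      by_cases hij : i = j
      · subst hij; rw [hφj]; exact hu
      · rw [hφother i hij hik]; exact hψ_int i
    have hkj : k ∈ Finset.univ.erase j := Finset.mem_erase.2 ⟨fun hh => hjk hh.symm, Finset.mem_univ _⟩
    have hrw : ∀ z : Fin K → Z, D z * (u (z j) * w (z k)) = ∏ i, φ i (z i) := by
      intro z
      have e1 : ∀ (α : Fin K → Z → ℝ), ∏ i, α i (z i)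
          = α j (z j) * (α k (z k) * ∏ i ∈ (Finset.univ.erase j).erase k, α i (z i)) := by
        intro α
        rw [← Finset.mul_prod_erase Finset.univ _ (Finset.mem_univ j),
          ← Finset.mul_prod_erase _ _ hkj]
      have e3 : ∏ i ∈ (Finset.univ.erase j).erase k, φ i (z i)
          = ∏ i ∈ (Finset.univ.erase j).erase k, ψ i (z i) :=
        Finset.prod_congr rfl fun i hi => by
          rw [hφother i (Finset.ne_of_mem_erase (Finset.mem_of_mem_erase hi))
            (Finset.ne_of_mem_erase hi)]
      simp only [hDdef]
      rw [e1 ψ, e1 φ, e3]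
      simp only [hφj, hφk]
      ring
    constructor
    · rw [show (fun z : Fin K → Z => D z * (u (z j) * w (z k))) = fun z => ∏ i, φ i (z i) from
        funext hrw]
      exact pi_integrable hφ_int
    · rw [show (fun z : Fin K → Z => D z * (u (z j) * w (z k))) = fun z => ∏ i, φ i (z i) from
        funext hrw, hμK, pi_integral,
        ← Finset.mul_prod_erase Finset.univ _ (Finset.mem_univ j),
        ← Finset.mul_prod_erase _ _ hkj]
      have e4 : ∏ i ∈ (Finset.univ.erase j).erase k, ∫ z, φ i z ∂μ = 1 :=
        Finset.prod_eq_one fun i hi => by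
          rw [hφother i (Finset.ne_of_mem_erase (Finset.mem_of_mem_erase hi))
            (Finset.ne_of_mem_erase hi)]
          exact hψ_norm i
      rw [e4, mul_one]
      simp only [hφj, hφk]
  -- avg
  set avg : (Fin K → Z) → ℝ := fun z => (1 / (K : ℝ)) * ∑ k, exp (t (z k)) with havgdef
  have havg_meas : Measurable avg :=
    measurable_const.mul (Finset.measurable_sum _ fun k _ => hf_meas.comp (measurable_pi_apply k))
  have hKcast : ∀ r : ℝ, ∑ _k : Fin K, r = (K : ℝ) * r := by
    intro r
    rw [Finset.sum_const, Finset.card_univ, Fintype.card_fin, nsmul_eq_mul]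
  have havg_lb : ∀ z, exp (-C) ≤ avg z := by
    intro z
    have h1 : (K:ℝ) * exp (-C) ≤ ∑ k : Fin K, exp (t (z k)) := by
      rw [← hKcast (exp (-C))]
      exact Finset.sum_le_sum fun k _ => hflb _
    simp only [havgdef]
    rw [show exp (-C) = (1/(K:ℝ)) * ((K:ℝ) * exp (-C)) by field_simp]
    exact mul_le_mul_of_nonneg_left h1 (by positivity)
  have havg_ub : ∀ z, avg z ≤ exp C := by
    intro z
    have h1 : ∑ k : Fin K, exp (t (z k)) ≤ (K:ℝ) * exp C := by
      rw [← hKcast (exp C)]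
      exact Finset.sum_le_sum fun k _ => hfub _
    simp only [havgdef]
    rw [show exp C = (1/(K:ℝ)) * ((K:ℝ) * exp C) by field_simp]
    exact mul_le_mul_of_nonneg_left h1 (by positivity)
  have havg_pos : ∀ z, 0 < avg z := fun z => lt_of_lt_of_le hc_pos (havg_lb z)
  have havgm : ∀ z : Fin K → Z, avg z - m = (1/(K:ℝ)) * ∑ k : Fin K, v (z k) := by
    intro z
    simp only [havgdef, hvdef]
    rw [Finset.sum_sub_distrib, hKcast m]
    field_simp
  have havgm_bdd : ∀ z, |avg z - m| ≤ exp C := by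
    intro z
    rw [abs_le]
    constructor
    · linarith [havg_lb z, hmu, hc_pos]
    · linarith [havg_ub z, hml, hc_pos]
  -- integrand identity
  have hintegrand : ∀ z : Fin K → Z,
      g (z 0) * (∏ k ∈ Finset.univ.erase (0 : Fin K), h (z k)) *
        log (exp (t (z 0)) / ((1 / (K : ℝ)) * ∑ k, exp (t (z k))))
      = D z * (t (z 0) - log (avg z)) := by
    intro z
    have h1 : log (exp (t (z 0)) / avg z) = t (z 0) - log (avg z) := by
      rw [Real.log_div (exp_ne_zero _) (havg_pos z).ne', Real.log_exp]
    have h2 : D z = g (z 0) * ∏ k ∈ Finset.univ.erase (0 : Fin K), h (z k) := by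
      simp only [hDdef]
      rw [← Finset.mul_prod_erase Finset.univ _ (Finset.mem_univ (0 : Fin K)), hψ_eq0]
      congr 1
      exact Finset.prod_congr rfl fun i hi => by rw [hψ_eqne i (Finset.ne_of_mem_erase hi)]
    rw [h2, ← h1]
  -- D * t(z 0)
  have hgt_int : Integrable (fun z => g z * t z) μ := integrable_mul_of_bdd hgi ht_meas htb
  have hψt_int : Integrable (fun z => ψ 0 z * t z) μ := by rw [hψ_eq0]; exact hgt_int
  have hkey1t := key1 0 t hψt_int
  have hDt_val : ∫ z, D z * t (z 0) ∂μK = ∫ z, g z * t z ∂μ := by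
    rw [hkey1t.2]
    simp only [hψ_eq0]
  -- D * log avg
  have hlavg_bdd : ∀ z, |log (avg z)| ≤ C := by
    intro z
    rw [abs_le]
    constructor
    · calc -C = log (exp (-C)) := (Real.log_exp _).symm
        _ ≤ log (avg z) := Real.log_le_log hc_pos (havg_lb z)
    · calc log (avg z) ≤ log (exp C) := Real.log_le_log (havg_pos z) (havg_ub z)
        _ = C := Real.log_exp _
  have hDlog_int : Integrable (fun z => D z * log (avg z)) μK :=
    integrable_mul_of_bdd hD_int (Real.measurable_log.comp havg_meas) hlavg_bdd
  have hsplit1 : ∫ z, D z * (t (z 0) - log (avg z)) ∂μK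
      = (∫ z, g z * t z ∂μ) - ∫ z, D z * log (avg z) ∂μK := by
    rw [show (fun z : Fin K → Z => D z * (t (z 0) - log (avg z)))
        = fun z => D z * t (z 0) - D z * log (avg z) from funext fun z => by ring]
    rw [integral_sub hkey1t.1 hDlog_int, hDt_val]
  -- first moment
  have hDvk_int : ∀ k : Fin K, Integrable (fun z : Fin K → Z => D z * v (z k)) μK :=
    fun k => (key1 k v (hψv_int k)).1
  have eavg : (fun z : Fin K → Z => D z * (avg z - m))
      = fun z => ∑ k : Fin K, (1/(K:ℝ)) * (D z * v (z k)) := by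
    funext z
    rw [havgm z, Finset.mul_sum, Finset.mul_sum]
    exact Finset.sum_congr rfl fun k _ => by ring
  have hDavg_int : Integrable (fun z => D z * (avg z - m)) μK := by
    rw [eavg]
    exact integrable_finset_sum _ fun k _ => ((hDvk_int k).const_mul _)
  have hDavg_val : ∫ z, D z * (avg z - m) ∂μK
      = (1/(K:ℝ)) * ((∫ z, g z * exp (t z) ∂μ) - m) := by
    rw [eavg, integral_finset_sum _ fun k _ => ((hDvk_int k).const_mul _)]
    have e2 : ∀ k : Fin K, ∫ z, (1/(K:ℝ)) * (D z * v (z k)) ∂μK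
        = (1/(K:ℝ)) * (if k = 0 then (∫ z, g z * exp (t z) ∂μ) - m else 0) := by
      intro k
      rw [integral_const_mul, (key1 k v (hψv_int k)).2, hψv_val k]
    rw [Finset.sum_congr rfl fun k _ => e2 k, ← Finset.mul_sum]
    congr 1
    rw [Finset.sum_ite_eq' Finset.univ (0 : Fin K)]
    simp
  -- second moment
  have hDvv_int : ∀ j k : Fin K,
      Integrable (fun z : Fin K → Z => D z * (v (z j) * v (z k))) μK := by
    intro j k
    rcases eq_or_ne j k with hjk | hjk
    · subst hjk
      exact (key1 j (fun w => v w * v w) (hψvv_int j)).1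
    · exact (key2 j k hjk v v (hψv_int j) (hψv_int k)).1
  have hDvv_val : ∀ j k : Fin K, ∫ z, D z * (v (z j) * v (z k)) ∂μK
      = if j = k then ∫ z, ψ j z * (v z * v z) ∂μ else 0 := by
    intro j k
    rcases eq_or_ne j k with hjk | hjk
    · subst hjk
      rw [if_pos rfl]
      exact (key1 j (fun w => v w * v w) (hψvv_int j)).2
    · rw [if_neg hjk, (key2 j k hjk v v (hψv_int j) (hψv_int k)).2]
      rcases eq_or_ne j 0 with hj0 | hj0
      · have hk0 : k ≠ 0 := fun hk => hjk (by rw [hj0, hk])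
        rw [hψv_val k, if_neg hk0, mul_zero]
      · rw [hψv_val j, if_neg hj0, zero_mul]
  have esq : (fun z : Fin K → Z => D z * (avg z - m) ^ 2)
      = fun z => ∑ j : Fin K, ∑ k : Fin K,
          ((1/(K:ℝ)) * (1/(K:ℝ))) * (D z * (v (z j) * v (z k))) := by
    funext z
    rw [sq, havgm z]
    rw [show ((1/(K:ℝ)) * ∑ k : Fin K, v (z k)) * ((1/(K:ℝ)) * ∑ k : Fin K, v (z k))
        = ((1/(K:ℝ)) * (1/(K:ℝ))) * ((∑ j : Fin K, v (z j)) * (∑ k : Fin K, v (z k))) from by ring]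
    rw [Finset.sum_mul_sum, Finset.mul_sum, Finset.mul_sum]
    refine Finset.sum_congr rfl fun j _ => ?_
    rw [Finset.mul_sum, Finset.mul_sum]
    exact Finset.sum_congr rfl fun k _ => by ring
  have hDsq_int : Integrable (fun z => D z * (avg z - m) ^ 2) μK := by
    rw [esq]
    exact integrable_finset_sum _ fun j _ =>
      integrable_finset_sum _ fun k _ => ((hDvv_int j k).const_mul _)
  have hDsq_le : ∫ z, D z * (avg z - m) ^ 2 ∂μK ≤ exp C ^ 2 / K := by
    have hval : ∫ z, D z * (avg z - m) ^ 2 ∂μK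
        = ((1/(K:ℝ)) * (1/(K:ℝ))) * ∑ j : Fin K, ∫ z, ψ j z * (v z * v z) ∂μ := by
      rw [esq, integral_finset_sum _ (fun j _ =>
        integrable_finset_sum _ fun k _ => ((hDvv_int j k).const_mul _))]
      have e3 : ∀ j : Fin K,
          ∫ z, ∑ k : Fin K, ((1/(K:ℝ)) * (1/(K:ℝ))) * (D z * (v (z j) * v (z k))) ∂μK
          = ((1/(K:ℝ)) * (1/(K:ℝ))) * ∫ z, ψ j z * (v z * v z) ∂μ := by
        intro j
        rw [integral_finset_sum _ (fun k _ => ((hDvv_int j k).const_mul _))]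
        have e4 : ∀ k : Fin K,
            ∫ z, ((1/(K:ℝ)) * (1/(K:ℝ))) * (D z * (v (z j) * v (z k))) ∂μK
            = ((1/(K:ℝ)) * (1/(K:ℝ)))
                * (if j = k then ∫ z, ψ j z * (v z * v z) ∂μ else 0) := fun k => by
          rw [integral_const_mul, hDvv_val j k]
        rw [Finset.sum_congr rfl fun k _ => e4 k, ← Finset.mul_sum]
        congr 1
        rw [Finset.sum_ite_eq Finset.univ j]
        simp
      rw [Finset.sum_congr rfl fun j _ => e3 j, ← Finset.mul_sum]
    rw [hval]
    have h1 : ∑ j : Fin K, ∫ z, ψ j z * (v z * v z) ∂μ ≤ (K:ℝ) * exp C ^ 2 := by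
      rw [← hKcast (exp C ^ 2)]
      exact Finset.sum_le_sum fun j _ => hψvv_le j
    calc ((1/(K:ℝ)) * (1/(K:ℝ))) * ∑ j : Fin K, ∫ z, ψ j z * (v z * v z) ∂μ
        ≤ ((1/(K:ℝ)) * (1/(K:ℝ))) * ((K:ℝ) * exp C ^ 2) :=
          mul_le_mul_of_nonneg_left h1 (by positivity)
      _ = exp C ^ 2 / K := by field_simp
  -- Taylor remainder
  have hR_bdd : ∀ z : Fin K → Z, |log (avg z) - log m - (avg z - m)/m|
      ≤ (avg z - m)^2 / exp (-C) ^ 2 :=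
    fun z => log_taylor_bound hc_pos (havg_lb z) hml
  have hR_bdd' : ∀ z : Fin K → Z, |log (avg z) - log m - (avg z - m)/m|
      ≤ exp C ^ 2 / exp (-C) ^ 2 := by
    intro z
    refine (hR_bdd z).trans ?_
    have h7 : (avg z - m)^2 ≤ exp C ^ 2 := by
      calc (avg z - m)^2 = |avg z - m|^2 := (sq_abs _).symm
        _ ≤ exp C ^ 2 := pow_le_pow_left₀ (abs_nonneg _) (havgm_bdd z) 2
    gcongr
  have hR_meas : Measurable (fun z : Fin K → Z => log (avg z) - log m - (avg z - m)/m) :=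
    ((Real.measurable_log.comp havg_meas).sub measurable_const).sub
      ((havg_meas.sub measurable_const).div_const m)
  have hDR_int : Integrable (fun z => D z * (log (avg z) - log m - (avg z - m)/m)) μK :=
    integrable_mul_of_bdd hD_int hR_meas hR_bdd'
  have hexpneg : exp (-C) ^ 2 = (exp C ^ 2)⁻¹ := by rw [Real.exp_neg, inv_pow]
  have hDR_le : |∫ z, D z * (log (avg z) - log m - (avg z - m)/m) ∂μK| ≤ exp C ^ 4 / K := by
    have h1 : ‖∫ z, D z * (log (avg z) - log m - (avg z - m)/m) ∂μK‖
        ≤ ∫ z, (D z * (avg z - m)^2) * exp C ^ 2 ∂μK := by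
      refine norm_integral_le_of_norm_le (hDsq_int.mul_const _) ?_
      filter_upwards [hD0] with z hz
      rw [Real.norm_eq_abs, abs_mul, abs_of_nonneg hz]
      calc D z * |log (avg z) - log m - (avg z - m)/m|
          ≤ D z * ((avg z - m)^2 / exp (-C)^2) := mul_le_mul_of_nonneg_left (hR_bdd z) hz
        _ = (D z * (avg z - m)^2) * exp C ^ 2 := by
            rw [hexpneg, div_eq_mul_inv, inv_inv]
            ring
    rw [Real.norm_eq_abs] at h1
    refine h1.trans ?_
    rw [integral_mul_const]
    calc (∫ z, D z * (avg z - m)^2 ∂μK) * exp C ^ 2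
        ≤ (exp C ^ 2 / K) * exp C ^ 2 :=
          mul_le_mul_of_nonneg_right hDsq_le (by positivity)
      _ = exp C ^ 4 / K := by ring
  -- assemble
  have hmain : (∫ z : Fin K → Z,
      g (z 0) * (∏ k ∈ Finset.univ.erase (0 : Fin K), h (z k)) *
        log (exp (t (z 0)) / ((1 / (K : ℝ)) * ∑ k, exp (t (z k)))) ∂μK)
      = ∫ z, D z * (t (z 0) - log (avg z)) ∂μK :=
    integral_congr_ae (Filter.Eventually.of_forall hintegrand)
  have hDlogm : ∫ z, D z * log (avg z) ∂μK - log m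
      = (∫ z, D z * (avg z - m) ∂μK) / m
        + ∫ z, D z * (log (avg z) - log m - (avg z - m)/m) ∂μK := by
    have e : (fun z : Fin K → Z => D z * log (avg z))
        = fun z => (D z * (avg z - m)) * (1/m)
            + (D z * (log (avg z) - log m - (avg z - m)/m) + log m * D z) := by
      funext z
      field_simp
      ring
    have hsum_int : Integrable (fun z : Fin K → Z =>
        D z * (log (avg z) - log m - (avg z - m)/m) + log m * D z) μK :=
      hDR_int.add (hD_int.const_mul _)
    have hmul_int : Integrable (fun z : Fin K → Z => (D z * (avg z - m)) * (1/m)) μK :=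
      hDavg_int.mul_const _
    rw [e, integral_add hmul_int hsum_int,
      integral_add hDR_int (hD_int.const_mul _), integral_mul_const, integral_const_mul, hD_norm]
    ring
  rw [hmain, hsplit1]
  have e5 : (∫ z, g z * t z ∂μ) - (∫ z, D z * log (avg z) ∂μK)
        - ((∫ z, g z * t z ∂μ) - log m)
      = -((∫ z, D z * (avg z - m) ∂μK) / m
          + ∫ z, D z * (log (avg z) - log m - (avg z - m)/m) ∂μK) := by
    rw [← hDlogm]; ring
  rw [e5, abs_neg]
  refine (abs_add_le _ _).trans ?_
  have b1 : |(∫ z, D z * (avg z - m) ∂μK) / m| ≤ exp C ^ 2 / K := by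
    rw [abs_div, abs_of_pos hm_pos, hDavg_val, abs_mul,
      abs_of_pos (show (0:ℝ) < 1/(K:ℝ) by positivity)]
    have h6 : |(∫ z, g z * exp (t z) ∂μ) - m| ≤ exp C := by
      rw [abs_le]
      constructor
      · linarith [hgel, hmu, hc_pos]
      · linarith [hgeu, hml, hc_pos]
    calc (1/(K:ℝ)) * |(∫ z, g z * exp (t z) ∂μ) - m| / m
        ≤ (1/(K:ℝ)) * exp C / exp (-C) := by gcongr
      _ = exp C ^ 2 / K := by
          rw [Real.exp_neg, div_eq_mul_inv, inv_inv]
          ring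
  have := hDR_le
  have hfinal : exp C ^ 2 / K + exp C ^ 4 / K = (exp C ^ 2 + exp C ^ 4) / K := by ring
  linarith

variable {X Z : Type*} [MeasurableSpace X] [MeasurableSpace Z]

/-- Marginal density `p_X(x) = ∫ p(x,z) dμ_Z(z)`. -/
def pX (μZ : Measure Z) (p : X × Z → ℝ) (x : X) : ℝ := ∫ z, p (x, z) ∂μZ

/-- Marginal density `p_Z(z) = ∫ p(x,z) dμ_X(x)`. -/
def pZ (μX : Measure X) (p : X × Z → ℝ) (z : Z) : ℝ := ∫ x, p (x, z) ∂μX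

/-- Barber–Agakov lower bound `I_BA_L(q) = ∫∫ p(x,z) log(q(z|x)/p_Z(z))`. -/
def IBAL (μX : Measure X) (μZ : Measure Z) (p q : X × Z → ℝ) : ℝ :=
  ∫ w, p w * log (q w / pZ μX p w.2) ∂(μX.prod μZ)

/-- Inner `Z^K`-integral of the GIWAE contrastive term. -/
def giwaeInner (μZ : Measure Z) (p q T : X × Z → ℝ) (K : ℕ) [NeZero K] (x : X) : ℝ :=
  ∫ z : Fin K → Z,
    (p (x, z 0) / pX μZ p x) * (∏ k ∈ Finset.univ.erase (0 : Fin K), q (x, z k)) *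
      log (exp (T (x, z 0)) / ((1 / (K : ℝ)) * ∑ k, exp (T (x, z k))))
    ∂(Measure.pi fun _ : Fin K => μZ)

/-- GIWAE lower bound on mutual information. -/
def IGIWAEL (μX : Measure X) (μZ : Measure Z) (p q T : X × Z → ℝ) (K : ℕ) [NeZero K] : ℝ :=
  IBAL μX μZ p q + ∫ x, pX μZ p x * giwaeInner μZ p q T K x ∂μX

/-- Partition function `𝒵_T(x) = ∫ q(z|x) e^{T(x,z)} dμ_Z(z)`. -/
def ZT (μZ : Measure Z) (q T : X × Z → ℝ) (x : X) : ℝ :=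
  ∫ z, q (x, z) * exp (T (x, z)) ∂μZ

/-- Implicit Barber–Agakov lower bound
`IBAL(q,T) = I_BA_L(q) + ∫∫ p T − ∫ p_X log 𝒵_T`. -/
def IBALT (μX : Measure X) (μZ : Measure Z) (p q T : X × Z → ℝ) : ℝ :=
  IBAL μX μZ p q + (∫ w, p w * T w ∂(μX.prod μZ))
    - ∫ x, pX μZ p x * log (ZT μZ q T x) ∂μX

set_option maxHeartbeats 1000000 in
/-- IBAL is the limiting behavior of the GIWAE lower bound as `K → ∞`. -/
theorem giwae_tendsto_ibal
    (μX : Measure X) (μZ : Measure Z) [SigmaFinite μX] [SigmaFinite μZ]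
    (p q T : X × Z → ℝ)
    (hp_meas : Measurable p)
    (hp_pos : ∀ᵐ w ∂(μX.prod μZ), 0 < p w)
    (hp_int : Integrable p (μX.prod μZ))
    (hp_norm : ∫ w, p w ∂(μX.prod μZ) = 1)
    (hq_meas : Measurable q)
    (hq_pos : ∀ᵐ w ∂(μX.prod μZ), 0 < q w)
    (hq_norm : ∀ x, ∫ z, q (x, z) ∂μZ = 1)
    (hT_meas : Measurable T)
    (hT_bdd : ∃ C : ℝ, ∀ w, |T w| ≤ C)
    (h_int_ba : Integrable (fun w => p w * log (q w / pZ μX p w.2)) (μX.prod μZ))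
    (h_int_pT : Integrable (fun w => p w * T w) (μX.prod μZ))
    (h_int_qeT : ∀ x, Integrable (fun z => q (x, z) * exp (T (x, z))) μZ)
    (h_int_pXlogZ : Integrable (fun x => pX μZ p x * log (ZT μZ q T x)) μX)
    (h_int_giwae_inner : ∀ (K : ℕ) [NeZero K], ∀ x, Integrable
      (fun z : Fin K → Z =>
        (p (x, z 0) / pX μZ p x) * (∏ k ∈ Finset.univ.erase (0 : Fin K), q (x, z k)) *
          log (exp (T (x, z 0)) / ((1 / (K : ℝ)) * ∑ k, exp (T (x, z k)))))
      (Measure.pi fun _ : Fin K => μZ))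
    (h_int_giwae_outer : ∀ (K : ℕ) [NeZero K],
      Integrable (fun x => pX μZ p x * giwaeInner μZ p q T K x) μX) :
    Tendsto (fun n : ℕ => IGIWAEL μX μZ p q T (n + 1)) atTop (nhds (IBALT μX μZ p q T)) := by
  obtain ⟨C0, hC0⟩ := hT_bdd
  set C := max C0 0 with hCdef
  have hC : 0 ≤ C := le_max_right _ _
  have hTb : ∀ w, |T w| ≤ C := fun w => (hC0 w).trans (le_max_left _ _)
  have hμZ : μZ ≠ (0 : Measure Z) := by
    intro h0
    rw [h0, Measure.prod_zero] at hp_norm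
    simp at hp_norm
  have hpX_int : Integrable (fun x => pX μZ p x) μX := hp_int.integral_prod_left
  have hpX_norm : ∫ x, pX μZ p x ∂μX = 1 := by
    rw [show (fun x => pX μZ p x) = fun x => ∫ z, p (x, z) ∂μZ from rfl,
      ← MeasureTheory.integral_prod p hp_int]
    exact hp_norm
  have hA_int : Integrable (fun x => ∫ z, p (x, z) * T (x, z) ∂μZ) μX :=
    h_int_pT.integral_prod_left
  have hG_int : Integrable (fun x => (∫ z, p (x, z) * T (x, z) ∂μZ)
      - pX μZ p x * log (ZT μZ q T x)) μX := hA_int.sub h_int_pXlogZ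
  have hIBALT : IBALT μX μZ p q T = IBAL μX μZ p q
      + ∫ x, ((∫ z, p (x, z) * T (x, z) ∂μZ) - pX μZ p x * log (ZT μZ q T x)) ∂μX := by
    rw [IBALT, integral_sub hA_int h_int_pXlogZ, MeasureTheory.integral_prod _ h_int_pT]
    ring
  have hgood : ∀ᵐ x ∂μX, ((∀ᵐ z ∂μZ, 0 < p (x, z)) ∧ (∀ᵐ z ∂μZ, 0 < q (x, z)))
      ∧ Integrable (fun z => p (x, z)) μZ :=
    ((Measure.ae_ae_of_ae_prod hp_pos).and (Measure.ae_ae_of_ae_prod hq_pos)).and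
      hp_int.prod_right_ae
  set B := exp C ^ 2 + exp C ^ 4 with hBdef
  have hdiff : ∀ (K : ℕ) [NeZero K],
      |IGIWAEL μX μZ p q T K - IBALT μX μZ p q T| ≤ B / K := by
    intro K hK
    haveI := hK
    have hbound : ∀ᵐ x ∂μX, ‖pX μZ p x * giwaeInner μZ p q T K x
        - ((∫ z, p (x, z) * T (x, z) ∂μZ) - pX μZ p x * log (ZT μZ q T x))‖
        ≤ pX μZ p x * (B / K) := by
      filter_upwards [hgood] with x hx
      obtain ⟨⟨hp1, hq1⟩, hp2⟩ := hx
      have hp0 : 0 ≤ᵐ[μZ] fun z => p (x, z) := hp1.mono fun z hz => hz.le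
      have hq0 : 0 ≤ᵐ[μZ] fun z => q (x, z) := hq1.mono fun z hz => hz.le
      have hpX_pos : 0 < pX μZ p x := pos_integral_of_ae_pos hμZ hp1 hp2
      have hg_meas : Measurable (fun z => p (x, z) / pX μZ p x) :=
        (hp_meas.comp measurable_prodMk_left).div_const _
      have hh_meas : Measurable (fun z => q (x, z)) := hq_meas.comp measurable_prodMk_left
      have ht_meas : Measurable (fun z => T (x, z)) := hT_meas.comp measurable_prodMk_left
      have hg0 : 0 ≤ᵐ[μZ] fun z => p (x, z) / pX μZ p x :=
        hp0.mono fun z hz => div_nonneg hz hpX_pos.le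
      have hgi : Integrable (fun z => p (x, z) / pX μZ p x) μZ := hp2.div_const _
      have hgn : ∫ z, p (x, z) / pX μZ p x ∂μZ = 1 := by
        rw [integral_div]
        exact div_self hpX_pos.ne'
      have hhi : Integrable (fun z => q (x, z)) μZ := by
        refine Integrable.mono' (((h_int_qeT x).norm).const_mul (exp C))
          hh_meas.aestronglyMeasurable ?_
        filter_upwards with z
        rw [Real.norm_eq_abs]
        have h1 : (1:ℝ) ≤ exp (C + T (x, z)) :=
          Real.one_le_exp (by linarith [(abs_le.1 (hTb (x, z))).1])
        calc |q (x, z)| = |q (x, z)| * 1 := (mul_one _).symm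
          _ ≤ |q (x, z)| * exp (C + T (x, z)) :=
              mul_le_mul_of_nonneg_left h1 (abs_nonneg _)
          _ = exp C * ‖q (x, z) * exp (T (x, z))‖ := by
              rw [Real.exp_add, norm_mul, Real.norm_eq_abs, Real.norm_eq_abs,
                abs_of_pos (exp_pos (T (x, z)))]
              ring
      have htb : ∀ z, |T (x, z)| ≤ C := fun z => hTb (x, z)
      have hkey := key_estimate μZ K (fun z => p (x, z) / pX μZ p x) (fun z => q (x, z))
        (fun z => T (x, z)) C hC hg_meas hh_meas ht_meas hg0 hq0 hgi hhi hgn (hq_norm x) htb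
        (h_int_qeT x)
      have e1 : giwaeInner μZ p q T K x = ∫ z : Fin K → Z,
          (p (x, z 0) / pX μZ p x) * (∏ k ∈ Finset.univ.erase (0 : Fin K), q (x, z k)) *
            log (exp (T (x, z 0)) / ((1 / (K : ℝ)) * ∑ k, exp (T (x, z k))))
          ∂(Measure.pi fun _ : Fin K => μZ) := rfl
      have e2 : ZT μZ q T x = ∫ z, q (x, z) * exp (T (x, z)) ∂μZ := rfl
      have hkey' : |giwaeInner μZ p q T K x
          - ((∫ z, p (x, z) / pX μZ p x * T (x, z) ∂μZ) - log (ZT μZ q T x))| ≤ B / K := by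
        rw [e1, e2]
        simpa using hkey
      have hA_eq : ∫ z, p (x, z) / pX μZ p x * T (x, z) ∂μZ
          = (∫ z, p (x, z) * T (x, z) ∂μZ) / pX μZ p x := by
        rw [← integral_div]
        exact integral_congr_ae (Filter.Eventually.of_forall fun z => by ring)
      rw [Real.norm_eq_abs]
      have hfact : pX μZ p x * giwaeInner μZ p q T K x
          - ((∫ z, p (x, z) * T (x, z) ∂μZ) - pX μZ p x * log (ZT μZ q T x))
          = pX μZ p x * (giwaeInner μZ p q T K x
              - ((∫ z, p (x, z) / pX μZ p x * T (x, z) ∂μZ) - log (ZT μZ q T x))) := by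
        rw [hA_eq]
        field_simp
      rw [hfact, abs_mul, abs_of_pos hpX_pos]
      exact mul_le_mul_of_nonneg_left hkey' hpX_pos.le
    have hdiff_eq : IGIWAEL μX μZ p q T K - IBALT μX μZ p q T
        = ∫ x, (pX μZ p x * giwaeInner μZ p q T K x
            - ((∫ z, p (x, z) * T (x, z) ∂μZ) - pX μZ p x * log (ZT μZ q T x))) ∂μX := by
      rw [IGIWAEL, hIBALT, integral_sub (h_int_giwae_outer K) hG_int]
      ring
    rw [hdiff_eq]
    have hb := norm_integral_le_of_norm_le (hpX_int.mul_const (B / K)) hbound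
    calc |∫ x, (pX μZ p x * giwaeInner μZ p q T K x
            - ((∫ z, p (x, z) * T (x, z) ∂μZ) - pX μZ p x * log (ZT μZ q T x))) ∂μX|
        ≤ ∫ x, pX μZ p x * (B / K) ∂μX := by
          rw [← Real.norm_eq_abs]
          exact hb
      _ = B / K := by rw [integral_mul_const, hpX_norm, one_mul]
  rw [tendsto_iff_dist_tendsto_zero]
  have hsq : Tendsto (fun n : ℕ => B / ((n + 1 : ℕ) : ℝ)) atTop (nhds 0) :=
    (tendsto_add_atTop_iff_nat 1).2 (tendsto_const_div_atTop_nhds_zero_nat B)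
  refine squeeze_zero (fun n => dist_nonneg) (fun n => ?_) hsq
  rw [Real.dist_eq]
  exact hdiff (n + 1)

end Stmt14
end
end

section
/- (Convergence of the GIWAE marginal SNIS distribution to the energy-based posterior.) For every integer K ≥ 1, the marginal SNIS density ρ_K is a probability density with respect to μ, and as K → ∞ both Kullback–Leibler divergences vanish: D_KL(ρ_K ‖ π) → 0 and D_KL(π ‖ ρ_K) → 0, where D_KL(r ‖ s) := ∫ r·log(r/s) dμ. -/
open MeasureTheory Real Filter

noncomputable section

namespace Stmt15Aux
variable {Ω : Type*} [MeasurableSpace Ω] {μ : Measure Ω} [SigmaFinite μ]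

lemma pi_int {n : ℕ} {g : Fin n → Ω → ℝ} (hg : ∀ i, Integrable (g i) μ) :
    Integrable (fun y : Fin n → Ω => ∏ j, g j (y j)) (Measure.pi fun _ => μ) := by
  letI : MeasureSpace Ω := ⟨μ⟩
  haveI : SigmaFinite (volume : Measure Ω) := ‹SigmaFinite μ›
  exact Integrable.fin_nat_prod hg

lemma pi_integral {n : ℕ} (g : Fin n → Ω → ℝ) :
    ∫ y : Fin n → Ω, ∏ j, g j (y j) ∂(Measure.pi fun _ => μ) = ∏ j, ∫ ω, g j ω ∂μ := by
  letI : MeasureSpace Ω := ⟨μ⟩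
  haveI : SigmaFinite (volume : Measure Ω) := ‹SigmaFinite μ›
  exact integral_fin_nat_prod_eq_prod g

lemma int_mul_bdd {α : Type*} [MeasurableSpace α] {ν : Measure α} {g r : α → ℝ}
    (hg : Integrable g ν) (hr : AEStronglyMeasurable r ν) {B : ℝ} (hB : ∀ x, |r x| ≤ B) :
    Integrable (fun x => g x * r x) ν := by
  have := hg.bdd_mul hr (c := B) (Filter.Eventually.of_forall fun x => by simpa using hB x)
  exact this.congr (Filter.Eventually.of_forall fun x => mul_comm _ _)

lemma log_abs_le {r ε : ℝ} (h : |r - 1| ≤ ε) (hε : ε ≤ 1/2) :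
    |Real.log r| ≤ 2 * ε ∧ |r * Real.log r| ≤ 3 * ε := by
  obtain ⟨h1, h2⟩ := abs_le.1 h
  have hε0 : 0 ≤ ε := le_trans (abs_nonneg _) h
  have hrpos : 0 < r := by linarith
  have hlog : |Real.log r| ≤ 2 * ε := by
    rcases le_or_gt 1 r with hr1 | hr1
    · have hle : Real.log r ≤ r - 1 := Real.log_le_sub_one_of_pos hrpos
      have h0 : 0 ≤ Real.log r := Real.log_nonneg hr1
      rw [abs_of_nonneg h0]; linarith
    · have h0 : Real.log r < 0 := Real.log_neg hrpos hr1
      have hle : Real.log r⁻¹ ≤ r⁻¹ - 1 := Real.log_le_sub_one_of_pos (by positivity)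
      rw [Real.log_inv] at hle
      rw [abs_of_neg h0]
      have hr2 : r⁻¹ - 1 ≤ 2 * (1 - r) := by
        rw [sub_le_iff_le_add, inv_le_iff_one_le_mul₀ hrpos]
        nlinarith
      linarith
  refine ⟨hlog, ?_⟩
  have : |r * Real.log r| = |r| * |Real.log r| := abs_mul _ _
  rw [this, abs_of_pos hrpos]
  nlinarith [abs_nonneg (Real.log r)]

lemma sum_meas {n : ℕ} {f : Ω → ℝ} (hf : Measurable f) :
    Measurable (fun y : Fin n → Ω => ∑ j, f (y j)) :=
  Finset.measurable_sum _ fun j _ => hf.comp (measurable_pi_apply j)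

lemma prod_meas {n : ℕ} {q : Ω → ℝ} (hq : Measurable q) :
    Measurable (fun y : Fin n → Ω => ∏ j, q (y j)) :=
  Finset.measurable_prod _ fun j _ => hq.comp (measurable_pi_apply j)

lemma variance_pi {n : ℕ} {q f : Ω → ℝ} {Z V2 b : ℝ}
    (hq_meas : Measurable q) (hq_int : Integrable q μ) (hq_norm : ∫ ω, q ω ∂μ = 1)
    (hf_meas : Measurable f) (hfb : ∀ ω, |f ω - Z| ≤ b)
    (hqf_int : Integrable (fun ω => q ω * f ω) μ) (hZ : ∫ ω, q ω * f ω ∂μ = Z)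
    (hV2 : V2 = ∫ ω, q ω * (f ω - Z) ^ 2 ∂μ) :
    ∫ y : Fin n → Ω, (∏ j, q (y j)) * ((∑ j, f (y j)) - n * Z) ^ 2
      ∂(Measure.pi fun _ => μ) = n * V2 := by
  classical
  set h : Fin n → Fin n → Fin n → Ω → ℝ := fun i j k ω =>
    q ω * ((if k = i then f ω - Z else 1) * (if k = j then f ω - Z else 1)) with hh
  -- basic integrability facts
  have int1 : Integrable (fun ω => q ω * (f ω - Z)) μ := by
    have := hq_int.bdd_mul ((hf_meas.sub measurable_const).aestronglyMeasurable)
      (c := b) (Filter.Eventually.of_forall fun x => by simpa using hfb x)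
    exact this.congr (Filter.Eventually.of_forall fun ω => mul_comm _ _)
  have int2 : Integrable (fun ω => q ω * ((f ω - Z) * (f ω - Z))) μ := by
    have hm : AEStronglyMeasurable (fun ω => (f ω - Z) * (f ω - Z)) μ :=
      ((hf_meas.sub measurable_const).mul (hf_meas.sub measurable_const)).aestronglyMeasurable
    have := hq_int.bdd_mul hm (c := b * b) (Filter.Eventually.of_forall fun x => by
      rw [Real.norm_eq_abs, abs_mul]
      exact mul_le_mul (hfb x) (hfb x) (abs_nonneg _) (le_trans (abs_nonneg _) (hfb x)))
    exact this.congr (Filter.Eventually.of_forall fun ω => mul_comm _ _)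
  have hqfZ : ∫ ω, q ω * (f ω - Z) ∂μ = 0 := by
    have he : ∀ ω, q ω * (f ω - Z) = q ω * f ω - Z * q ω := fun ω => by ring
    simp_rw [he]
    rw [integral_sub hqf_int (hq_int.const_mul Z), hZ, integral_const_mul, hq_norm]
    ring
  have hint_h : ∀ i j k, Integrable (h i j k) μ := by
    intro i j k
    by_cases hk1 : k = i
    · subst hk1
      by_cases hk2 : k = j
      · subst hk2
        simpa only [hh, if_pos rfl, if_true] using int2
      · simpa only [hh, if_pos rfl, if_true, if_neg hk2, mul_one] using int1
    · by_cases hk2 : k = j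
      · subst hk2
        simpa only [hh, if_pos rfl, if_true, if_neg hk1, one_mul] using int1
      · simpa only [hh, if_neg hk1, if_neg hk2, mul_one] using hq_int
  have key1 : ∀ y : Fin n → Ω, (∏ j, q (y j)) * ((∑ j, f (y j)) - n * Z) ^ 2
      = ∑ i, ∑ j, ∏ k, h i j k (y k) := by
    intro y
    have hs : (∑ j, f (y j)) - (n : ℝ) * Z = ∑ j, (f (y j) - Z) := by
      rw [Finset.sum_sub_distrib, Finset.sum_const, Finset.card_univ, Fintype.card_fin,
        nsmul_eq_mul]
    have hprod : ∀ i j : Fin n, ∏ k, h i j k (y k)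
        = (∏ k, q (y k)) * ((f (y i) - Z) * (f (y j) - Z)) := by
      intro i j
      simp only [hh]
      rw [Finset.prod_mul_distrib, Finset.prod_mul_distrib, Finset.prod_ite_eq',
        Finset.prod_ite_eq']
      simp [Finset.mem_univ]
    rw [hs, sq, Finset.sum_mul_sum, Finset.mul_sum]
    refine Finset.sum_congr rfl fun i _ => ?_
    rw [Finset.mul_sum]
    exact Finset.sum_congr rfl fun j _ => (hprod i j).symm
  have hii : ∀ i k : Fin n, ∫ ω, h i i k ω ∂μ = if k = i then V2 else 1 := by
    intro i k
    by_cases hk : k = i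
    · rw [if_pos hk, hV2]
      simp only [hh, hk, if_true]
      congr 1; funext ω; ring
    · simp only [hh, hk, if_false, mul_one, one_mul]
      simpa using hq_norm
  have hij0 : ∀ i j : Fin n, i ≠ j → ∫ ω, h i j i ω ∂μ = 0 := by
    intro i j hij
    simp only [hh, if_pos rfl, if_neg hij, mul_one]
    exact hqfZ
  have hsum : ∀ i j : Fin n, (∏ k, ∫ ω, h i j k ω ∂μ) = if i = j then V2 else 0 := by
    intro i j
    by_cases hij : i = j
    · subst hij
      rw [if_pos rfl, Finset.prod_congr rfl fun k _ => hii i k, Finset.prod_ite_eq']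
      simp
    · rw [if_neg hij]
      exact Finset.prod_eq_zero (Finset.mem_univ i) (hij0 i j hij)
  calc ∫ y : Fin n → Ω, (∏ j, q (y j)) * ((∑ j, f (y j)) - n * Z) ^ 2
        ∂(Measure.pi fun _ => μ)
      = ∫ y : Fin n → Ω, ∑ i, ∑ j, ∏ k, h i j k (y k) ∂(Measure.pi fun _ => μ) := by
        exact integral_congr_ae (Filter.Eventually.of_forall key1)
    _ = ∑ i, ∑ j, ∫ y : Fin n → Ω, ∏ k, h i j k (y k) ∂(Measure.pi fun _ => μ) := by
        rw [integral_finset_sum _ fun i _ =>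
          integrable_finset_sum _ fun j _ => pi_int fun k => hint_h i j k]
        exact Finset.sum_congr rfl fun i _ =>
          integral_finset_sum _ fun j _ => pi_int fun k => hint_h i j k
    _ = ∑ i, ∑ j : Fin n, if i = j then V2 else 0 := by
        refine Finset.sum_congr rfl fun i _ => Finset.sum_congr rfl fun j _ => ?_
        rw [pi_integral, hsum]
    _ = (n : ℝ) * V2 := by
        simp [Finset.sum_ite_eq, Finset.mem_univ, Finset.sum_const, Finset.card_univ,
          nsmul_eq_mul]

lemma abs_moment_le {n : ℕ} {q f : Ω → ℝ} {Z V2 b t : ℝ}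
    (hq_meas : Measurable q) (hq_nonneg : ∀ ω, 0 ≤ q ω)
    (hq_int : Integrable q μ) (hq_norm : ∫ ω, q ω ∂μ = 1)
    (hf_meas : Measurable f) (hfb : ∀ ω, |f ω - Z| ≤ b)
    (hqf_int : Integrable (fun ω => q ω * f ω) μ) (hZ : ∫ ω, q ω * f ω ∂μ = Z)
    (hV2 : V2 = ∫ ω, q ω * (f ω - Z) ^ 2 ∂μ) (ht : 0 < t) :
    ∫ y : Fin n → Ω, (∏ j, q (y j)) * |(∑ j, f (y j)) - n * Z|
      ∂(Measure.pi fun _ => μ) ≤ (t + n * V2 / t) / 2 := by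
  classical
  set Pn := (Measure.pi fun _ : Fin n => μ) with hPn
  have hP_nonneg : ∀ y : Fin n → Ω, 0 ≤ ∏ j, q (y j) :=
    fun y => Finset.prod_nonneg fun j _ => hq_nonneg _
  have hP_int : Integrable (fun y : Fin n → Ω => ∏ j, q (y j)) Pn := pi_int fun _ => hq_int
  have hSb : ∀ y : Fin n → Ω, |(∑ j, f (y j)) - n * Z| ≤ n * b := by
    intro y
    have : (∑ j, f (y j)) - (n : ℝ) * Z = ∑ j, (f (y j) - Z) := by
      rw [Finset.sum_sub_distrib, Finset.sum_const, Finset.card_univ, Fintype.card_fin,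
        nsmul_eq_mul]
    rw [this]
    calc |∑ j, (f (y j) - Z)| ≤ ∑ j : Fin n, |f (y j) - Z| := Finset.abs_sum_le_sum_abs _ _
      _ ≤ ∑ _j : Fin n, b := Finset.sum_le_sum fun j _ => hfb _
      _ = n * b := by simp [Finset.sum_const, Finset.card_univ, nsmul_eq_mul]
  have hSmeas : Measurable (fun y : Fin n → Ω => (∑ j, f (y j)) - n * Z) :=
    (sum_meas hf_meas).sub measurable_const
  have lhs_int : Integrable (fun y : Fin n → Ω =>
      (∏ j, q (y j)) * |(∑ j, f (y j)) - n * Z|) Pn :=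
    int_mul_bdd hP_int hSmeas.abs.aestronglyMeasurable (B := n * b)
      (fun y => by rw [abs_abs]; exact hSb y)
  have sq_int : Integrable (fun y : Fin n → Ω =>
      (∏ j, q (y j)) * ((∑ j, f (y j)) - n * Z) ^ 2) Pn :=
    int_mul_bdd hP_int ((hSmeas.pow_const 2).aestronglyMeasurable) (B := (n * b) ^ 2)
      (fun y => by
        rw [abs_pow, sq_abs, ← sq_abs]
        exact pow_le_pow_left₀ (abs_nonneg _) (hSb y) 2)
  have rhs_int : Integrable (fun y : Fin n → Ω =>
      (t / 2) * (∏ j, q (y j)) + (1 / (2 * t)) * ((∏ j, q (y j)) * ((∑ j, f (y j)) - n * Z) ^ 2)) Pn :=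
    (hP_int.const_mul _).add (sq_int.const_mul _)
  have hpt : ∀ y : Fin n → Ω, (∏ j, q (y j)) * |(∑ j, f (y j)) - n * Z|
      ≤ (t / 2) * (∏ j, q (y j)) + (1 / (2 * t)) * ((∏ j, q (y j)) * ((∑ j, f (y j)) - n * Z) ^ 2) := by
    intro y
    have h1 : |(∑ j, f (y j)) - n * Z| ≤ t / 2 + ((∑ j, f (y j)) - n * Z) ^ 2 / (2 * t) := by
      set x := (∑ j, f (y j)) - (n : ℝ) * Z
      have hx2 : x ^ 2 = |x| ^ 2 := (sq_abs x).symm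
      rw [hx2]
      set u := |x| with hu
      rw [← sub_nonneg]
      have huv : t / 2 + u ^ 2 / (2 * t) - u = (u - t) ^ 2 / (2 * t) := by
        field_simp
        ring
      rw [huv]
      positivity
    calc (∏ j, q (y j)) * |(∑ j, f (y j)) - n * Z|
        ≤ (∏ j, q (y j)) * (t / 2 + ((∑ j, f (y j)) - n * Z) ^ 2 / (2 * t)) :=
          mul_le_mul_of_nonneg_left h1 (hP_nonneg y)
      _ = (t / 2) * (∏ j, q (y j)) + (1 / (2 * t)) * ((∏ j, q (y j)) * ((∑ j, f (y j)) - n * Z) ^ 2) := by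
          field_simp
  calc ∫ y : Fin n → Ω, (∏ j, q (y j)) * |(∑ j, f (y j)) - n * Z| ∂Pn
      ≤ ∫ y : Fin n → Ω, (t / 2) * (∏ j, q (y j))
          + (1 / (2 * t)) * ((∏ j, q (y j)) * ((∑ j, f (y j)) - n * Z) ^ 2) ∂Pn :=
        integral_mono lhs_int rhs_int hpt
    _ = (t / 2) * (∫ y : Fin n → Ω, ∏ j, q (y j) ∂Pn)
          + (1 / (2 * t)) * (∫ y : Fin n → Ω, (∏ j, q (y j)) * ((∑ j, f (y j)) - n * Z) ^ 2 ∂Pn) := by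
        rw [integral_add (hP_int.const_mul _) (sq_int.const_mul _), integral_const_mul,
          integral_const_mul]
    _ = (t + n * V2 / t) / 2 := by
        have h1 : ∫ y : Fin n → Ω, ∏ j, q (y j) ∂Pn = 1 := by
          rw [pi_integral (fun _ : Fin n => q)]
          simp [hq_norm]
        have h2 := variance_pi (μ := μ) (n := n) hq_meas hq_int hq_norm hf_meas hfb hqf_int hZ hV2
        rw [h1, h2]
        field_simp

lemma ratio_bound {n : ℕ} {q f : Ω → ℝ} {a b Z : ℝ}
    (hq_nonneg : ∀ ω, 0 ≤ q ω) (hq_int : Integrable q μ) (hq_norm : ∫ ω, q ω ∂μ = 1)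
    (hf_meas : Measurable f) (ha : 0 < a) (haf : ∀ ω, a ≤ f ω) (hfb : ∀ ω, f ω ≤ b)
    (hZpos : 0 < Z) (z : Ω) :
    |((n + 1 : ℕ) : ℝ) * Z * (∫ y : Fin n → Ω, (∏ j, q (y j)) * (f z / (f z + ∑ j, f (y j)))
        ∂(Measure.pi fun _ => μ)) - f z|
      ≤ f z * (((∫ y : Fin n → Ω, (∏ j, q (y j)) * |(∑ j, f (y j)) - n * Z|
        ∂(Measure.pi fun _ => μ)) + Z + b) / (((n + 1 : ℕ) : ℝ) * a)) := by
  classical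
  set Pn := (Measure.pi fun _ : Fin n => μ) with hPn
  set K : ℝ := ((n + 1 : ℕ) : ℝ) with hKdef
  have hK : K = (n : ℝ) + 1 := by rw [hKdef]; push_cast; ring
  have hKpos : (0 : ℝ) < K := by rw [hK]; positivity
  have hfz : 0 < f z := lt_of_lt_of_le ha (haf z)
  have hfzb : f z ≤ b := hfb z
  have hab : a ≤ b := le_trans (haf z) hfzb
  have hP_nonneg : ∀ y : Fin n → Ω, 0 ≤ ∏ j, q (y j) :=
    fun y => Finset.prod_nonneg fun j _ => hq_nonneg _
  have hP_int : Integrable (fun y : Fin n → Ω => ∏ j, q (y j)) Pn := pi_int fun _ => hq_int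
  have e0 : ∫ y : Fin n → Ω, ∏ j, q (y j) ∂Pn = 1 := by
    rw [pi_integral (fun _ : Fin n => q)]; simp [hq_norm]
  have hSlb : ∀ y : Fin n → Ω, (n : ℝ) * a ≤ ∑ j, f (y j) := by
    intro y
    calc (n : ℝ) * a = ∑ _j : Fin n, a := by
          simp [Finset.sum_const, Finset.card_univ, nsmul_eq_mul]
      _ ≤ ∑ j, f (y j) := Finset.sum_le_sum fun j _ => haf _
  have hSub : ∀ y : Fin n → Ω, ∑ j, f (y j) ≤ (n : ℝ) * b := by
    intro y
    calc (∑ j, f (y j)) ≤ ∑ _j : Fin n, b := Finset.sum_le_sum fun j _ => hfb _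
      _ = (n : ℝ) * b := by simp [Finset.sum_const, Finset.card_univ, nsmul_eq_mul]
  have hDlb : ∀ y : Fin n → Ω, K * a ≤ f z + ∑ j, f (y j) := by
    intro y
    have := hSlb y
    have := haf z
    rw [hK]; nlinarith
  have hDpos : ∀ y : Fin n → Ω, 0 < f z + ∑ j, f (y j) :=
    fun y => lt_of_lt_of_le (by positivity) (hDlb y)
  have hKa : (0 : ℝ) < K * a := by positivity
  have hSnZ : ∀ y : Fin n → Ω, |(∑ j, f (y j)) - (n : ℝ) * Z| ≤ (n : ℝ) * (b + Z) := by
    intro y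
    rw [abs_le]
    constructor
    · have := hSlb y
      have hna : 0 ≤ (n : ℝ) * a := by positivity
      nlinarith [Nat.cast_nonneg (α := ℝ) n]
    · have := hSub y
      nlinarith [Nat.cast_nonneg (α := ℝ) n, hZpos.le]
  have hnum : ∀ y : Fin n → Ω, |K * Z - (f z + ∑ j, f (y j))|
      ≤ |(∑ j, f (y j)) - (n : ℝ) * Z| + (Z + b) := by
    intro y
    have h1 : K * Z - (f z + ∑ j, f (y j))
        = ((n : ℝ) * Z - ∑ j, f (y j)) + (Z - f z) := by rw [hK]; ring
    rw [h1]
    calc |((n : ℝ) * Z - ∑ j, f (y j)) + (Z - f z)|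
        ≤ |(n : ℝ) * Z - ∑ j, f (y j)| + |Z - f z| := abs_add_le _ _
      _ ≤ |(∑ j, f (y j)) - (n : ℝ) * Z| + (Z + b) := by
          rw [abs_sub_comm]
          have : |Z - f z| ≤ Z + b := abs_le.2 ⟨by linarith, by linarith⟩
          linarith
  have hM : ∀ y : Fin n → Ω, |(∑ j, f (y j)) - (n : ℝ) * Z| + (Z + b)
      ≤ (n : ℝ) * (b + Z) + (Z + b) := fun y => by linarith [hSnZ y]
  have hSmeas : Measurable (fun y : Fin n → Ω => ∑ j, f (y j)) := sum_meas hf_meas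
  have hb : 0 < b := lt_of_lt_of_le ha hab
  have hZb : (0:ℝ) ≤ Z + b := by linarith
  have hn0 : (0:ℝ) ≤ (n : ℝ) := Nat.cast_nonneg n
  have hBnn : (0:ℝ) ≤ (n : ℝ) * (b + Z) + (Z + b) :=
    add_nonneg (mul_nonneg hn0 (by linarith)) hZb
  -- integrable pieces
  have int_e1 : Integrable (fun y : Fin n → Ω =>
      (∏ j, q (y j)) * (f z * (K * Z - (f z + ∑ j, f (y j))) / (f z + ∑ j, f (y j)))) Pn := by
    refine int_mul_bdd hP_int ?_ (B := f z * ((n : ℝ) * (b + Z) + (Z + b)) / (K * a)) ?_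
    · exact ((measurable_const.mul ((measurable_const.sub
        (measurable_const.add hSmeas)))).div (measurable_const.add hSmeas)).aestronglyMeasurable
    · intro y
      rw [abs_div, abs_mul, abs_of_pos hfz, abs_of_pos (hDpos y)]
      apply div_le_div₀ (mul_nonneg hfz.le hBnn)
      · exact mul_le_mul_of_nonneg_left (le_trans (hnum y) (hM y)) hfz.le
      · exact hKa
      · exact hDlb y
  have int_rhs : Integrable (fun y : Fin n → Ω =>
      (∏ j, q (y j)) * (f z * ((|(∑ j, f (y j)) - (n : ℝ) * Z| + (Z + b)) / (K * a)))) Pn := by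
    refine int_mul_bdd hP_int ?_ (B := f z * (((n : ℝ) * (b + Z) + (Z + b)) / (K * a))) ?_
    · exact (measurable_const.mul (((hSmeas.sub measurable_const).abs.add
        measurable_const).div measurable_const)).aestronglyMeasurable
    · intro y
      rw [abs_mul, abs_of_pos hfz, abs_div, abs_of_pos hKa,
        abs_of_nonneg (add_nonneg (abs_nonneg _) hZb)]
      exact mul_le_mul_of_nonneg_left ((div_le_div_iff_of_pos_right hKa).2 (hM y)) hfz.le
  have int_w : Integrable (fun y : Fin n → Ω =>
      (∏ j, q (y j)) * (f z / (f z + ∑ j, f (y j)))) Pn := by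
    refine int_mul_bdd hP_int
      ((measurable_const.div (measurable_const.add hSmeas)).aestronglyMeasurable) (B := 1) ?_
    intro y
    rw [abs_div, abs_of_pos hfz, abs_of_pos (hDpos y)]
    rw [div_le_one (hDpos y)]
    have := hSlb y
    nlinarith
  have int_KZ : Integrable (fun y : Fin n → Ω =>
      (∏ j, q (y j)) * (K * Z * (f z / (f z + ∑ j, f (y j))))) Pn := by
    have := int_w.const_mul (K * Z)
    refine this.congr (Filter.Eventually.of_forall fun y => ?_)
    ring
  have int_Pfz : Integrable (fun y : Fin n → Ω => (∏ j, q (y j)) * f z) Pn :=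
    hP_int.mul_const _
  have int_absS : Integrable (fun y : Fin n → Ω =>
      (∏ j, q (y j)) * |(∑ j, f (y j)) - (n : ℝ) * Z|) Pn :=
    int_mul_bdd hP_int (hSmeas.sub measurable_const).abs.aestronglyMeasurable
      (B := (n : ℝ) * (b + Z)) (fun y => by rw [abs_abs]; exact hSnZ y)
  set W := ∫ y : Fin n → Ω, (∏ j, q (y j)) * (f z / (f z + ∑ j, f (y j))) ∂Pn with hW
  have hw1 : K * Z * W = ∫ y : Fin n → Ω,
      (∏ j, q (y j)) * (K * Z * (f z / (f z + ∑ j, f (y j)))) ∂Pn := by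
    rw [hW, ← integral_const_mul]
    congr 1; funext y; ring
  have hw2 : (f z : ℝ) = ∫ y : Fin n → Ω, (∏ j, q (y j)) * f z ∂Pn := by
    rw [integral_mul_const, e0, one_mul]
  have e1 : K * Z * W - f z = ∫ y : Fin n → Ω,
      (∏ j, q (y j)) * (f z * (K * Z - (f z + ∑ j, f (y j))) / (f z + ∑ j, f (y j))) ∂Pn := by
    have e2 : K * Z * W - f z = ∫ y : Fin n → Ω,
        ((∏ j, q (y j)) * (K * Z * (f z / (f z + ∑ j, f (y j))))
          - (∏ j, q (y j)) * f z) ∂Pn := by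
      rw [integral_sub int_KZ int_Pfz, ← hw1, ← hw2]
    rw [e2]
    refine integral_congr_ae (Filter.Eventually.of_forall fun y => ?_)
    have hD := (hDpos y).ne'
    field_simp
  have hpt : ∀ y : Fin n → Ω,
      |(∏ j, q (y j)) * (f z * (K * Z - (f z + ∑ j, f (y j))) / (f z + ∑ j, f (y j)))|
      ≤ (∏ j, q (y j)) * (f z * ((|(∑ j, f (y j)) - (n : ℝ) * Z| + (Z + b)) / (K * a))) := by
    intro y
    rw [abs_mul, abs_of_nonneg (hP_nonneg y)]
    refine mul_le_mul_of_nonneg_left ?_ (hP_nonneg y)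
    rw [abs_div, abs_mul, abs_of_pos hfz, abs_of_pos (hDpos y), mul_div_assoc]
    refine mul_le_mul_of_nonneg_left ?_ hfz.le
    exact div_le_div₀ (add_nonneg (abs_nonneg _) hZb) (hnum y) hKa (hDlb y)
  calc |K * Z * W - f z|
      = |∫ y : Fin n → Ω, (∏ j, q (y j)) * (f z * (K * Z - (f z + ∑ j, f (y j)))
          / (f z + ∑ j, f (y j))) ∂Pn| := by rw [e1]
    _ ≤ ∫ y : Fin n → Ω, |(∏ j, q (y j)) * (f z * (K * Z - (f z + ∑ j, f (y j)))
          / (f z + ∑ j, f (y j)))| ∂Pn := by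
        simpa only [Real.norm_eq_abs] using norm_integral_le_integral_norm
          (μ := Pn) (fun y : Fin n → Ω => (∏ j, q (y j)) *
            (f z * (K * Z - (f z + ∑ j, f (y j))) / (f z + ∑ j, f (y j))))
    _ ≤ ∫ y : Fin n → Ω, (∏ j, q (y j)) *
          (f z * ((|(∑ j, f (y j)) - (n : ℝ) * Z| + (Z + b)) / (K * a))) ∂Pn :=
        integral_mono int_e1.abs int_rhs hpt
    _ = f z * (((∫ y : Fin n → Ω, (∏ j, q (y j)) * |(∑ j, f (y j)) - (n : ℝ) * Z| ∂Pn)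
          + Z + b) / (K * a)) := by
        have hrw : ∀ y : Fin n → Ω, (∏ j, q (y j)) *
            (f z * ((|(∑ j, f (y j)) - (n : ℝ) * Z| + (Z + b)) / (K * a)))
            = (f z / (K * a)) * ((∏ j, q (y j)) * |(∑ j, f (y j)) - (n : ℝ) * Z|)
              + (f z * (Z + b) / (K * a)) * (∏ j, q (y j)) := by
          intro y; ring
        rw [integral_congr_ae (Filter.Eventually.of_forall hrw),
          integral_add (int_absS.const_mul _) (hP_int.const_mul _),
          integral_const_mul, integral_const_mul, e0]
        ring

lemma w_meas {n : ℕ} {q f : Ω → ℝ} (hq_meas : Measurable q) (hf_meas : Measurable f) :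
    Measurable (fun z => ∫ y : Fin n → Ω,
      (∏ j, q (y j)) * (f z / (f z + ∑ j, f (y j))) ∂(Measure.pi fun _ => μ)) := by
  have hF : StronglyMeasurable (fun p : Ω × (Fin n → Ω) =>
      (∏ j, q (p.2 j)) * (f p.1 / (f p.1 + ∑ j, f (p.2 j)))) := by
    apply Measurable.stronglyMeasurable
    have h1 : Measurable fun p : Ω × (Fin n → Ω) => ∏ j, q (p.2 j) :=
      (prod_meas hq_meas).comp measurable_snd
    have h2 : Measurable fun p : Ω × (Fin n → Ω) => f p.1 := hf_meas.comp measurable_fst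
    have h3 : Measurable fun p : Ω × (Fin n → Ω) => ∑ j, f (p.2 j) :=
      (sum_meas hf_meas).comp measurable_snd
    exact h1.mul (h2.div (h2.add h3))
  exact hF.integral_prod_right'.measurable

lemma norm_one {n : ℕ} {q f : Ω → ℝ}
    (hq_meas : Measurable q) (hq_nonneg : ∀ ω, 0 ≤ q ω) (hq_int : Integrable q μ)
    (hq_norm : ∫ ω, q ω ∂μ = 1) (hf_meas : Measurable f) (hf_pos : ∀ ω, 0 < f ω) :
    ∫ z, ((n + 1 : ℕ) : ℝ) * q z * (∫ y : Fin n → Ω,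
        (∏ j, q (y j)) * (f z / (f z + ∑ j, f (y j))) ∂(Measure.pi fun _ => μ)) ∂μ = 1 := by
  classical
  set Pn := (Measure.pi fun _ : Fin n => μ) with hPn
  set PK := (Measure.pi fun _ : Fin (n + 1) => μ) with hPK
  have hP_int : Integrable (fun y : Fin n → Ω => ∏ j, q (y j)) Pn := pi_int fun _ => hq_int
  have hPK_int : Integrable (fun x : Fin (n + 1) → Ω => ∏ i, q (x i)) PK :=
    pi_int fun _ => hq_int
  set G : Fin (n + 1) → (Fin (n + 1) → Ω) → ℝ :=
    fun i0 x => (∏ i, q (x i)) * (f (x i0) / ∑ i, f (x i)) with hG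
  have hD_pos : ∀ x : Fin (n + 1) → Ω, 0 < ∑ i, f (x i) :=
    fun x => Finset.sum_pos (fun i _ => hf_pos _) Finset.univ_nonempty
  have hG_bd : ∀ (i0 : Fin (n + 1)) (x : Fin (n + 1) → Ω), |f (x i0) / ∑ i, f (x i)| ≤ 1 := by
    intro i0 x
    rw [abs_div, abs_of_pos (hf_pos _), abs_of_pos (hD_pos x), div_le_one (hD_pos x)]
    exact Finset.single_le_sum (fun i _ => (hf_pos (x i)).le) (Finset.mem_univ i0)
  have hG_int : ∀ i0, Integrable (G i0) PK := fun i0 =>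
    int_mul_bdd hPK_int ((hf_meas.comp (measurable_pi_apply i0)).div
      (sum_meas hf_meas)).aestronglyMeasurable (hG_bd i0)
  -- step C : all G i0 have the same integral
  have hswap : ∀ i0, ∫ x, G i0 x ∂PK = ∫ x, G 0 x ∂PK := by
    intro i0
    have mp := measurePreserving_piCongrLeft (fun _ : Fin (n + 1) => μ) (Equiv.swap 0 i0)
    rw [hPK, ← mp.integral_comp' (G 0)]
    refine integral_congr_ae (Filter.Eventually.of_forall fun x => ?_)
    set e := MeasurableEquiv.piCongrLeft (fun _ : Fin (n + 1) => Ω) (Equiv.swap 0 i0) with he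
    have happ : ∀ i, e x (Equiv.swap 0 i0 i) = x i := fun i => by
      exact MeasurableEquiv.piCongrLeft_apply_apply (β := fun _ : Fin (n + 1) => Ω)
        (Equiv.swap 0 i0) x i
    have h0 : e x 0 = x i0 := by
      have := happ i0
      rwa [Equiv.swap_apply_right] at this
    have hprod : (∏ i, q (e x i)) = ∏ i, q (x i) := by
      rw [← Equiv.prod_comp (Equiv.swap 0 i0) (fun i => q (e x i))]
      exact Finset.prod_congr rfl fun i _ => by rw [happ i]
    have hsum : (∑ i, f (e x i)) = ∑ i, f (x i) := by
      rw [← Equiv.sum_comp (Equiv.swap 0 i0) (fun i => f (e x i))]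
      exact Finset.sum_congr rfl fun i _ => by rw [happ i]
    have hgoal : G 0 (e x) = G i0 x := by
      rw [hG]
      simp only []
      rw [hprod, hsum, h0]
    exact hgoal.symm
  -- step D : the integrals sum to one
  have hGsum : ∑ i0, ∫ x, G i0 x ∂PK = 1 := by
    rw [← integral_finset_sum _ fun i0 _ => hG_int i0]
    have hof : ∀ x : Fin (n + 1) → Ω, ∑ i0, G i0 x = ∏ i, q (x i) := by
      intro x
      rw [hG]
      simp only []
      rw [← Finset.mul_sum, ← Finset.sum_div, div_self (hD_pos x).ne', mul_one]
    rw [integral_congr_ae (Filter.Eventually.of_forall hof), pi_integral (fun _ => q)]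
    simp [hq_norm]
  have hG0 : ∫ x, G 0 x ∂PK = ((n + 1 : ℕ) : ℝ)⁻¹ := by
    have h1 : ∑ i0, ∫ x, G i0 x ∂PK = ((n + 1 : ℕ) : ℝ) * ∫ x, G 0 x ∂PK := by
      rw [Finset.sum_congr rfl fun i0 _ => hswap i0]
      simp [Finset.sum_const, Finset.card_univ, nsmul_eq_mul]
    rw [h1] at hGsum
    field_simp at hGsum ⊢
    linarith
  -- step A/B : plumbing from the (z, y) form to the Fin (n+1) form
  have mp0 := measurePreserving_piFinSuccAbove (fun _ : Fin (n + 1) => μ) 0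
  have step12 : ∫ z, q z * (∫ y : Fin n → Ω,
      (∏ j, q (y j)) * (f z / (f z + ∑ j, f (y j))) ∂Pn) ∂μ = ∫ x, G 0 x ∂PK := by
    have hH_int : Integrable (fun p : Ω × (Fin n → Ω) =>
        (q p.1 * ∏ j, q (p.2 j)) * (f p.1 / (f p.1 + ∑ j, f (p.2 j)))) (μ.prod Pn) := by
      have base : Integrable (fun p : Ω × (Fin n → Ω) => q p.1 * ∏ j, q (p.2 j)) (μ.prod Pn) :=
        hq_int.mul_prod hP_int
      refine int_mul_bdd base ?_ (B := 1) ?_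
      · have h2 : Measurable fun p : Ω × (Fin n → Ω) => f p.1 := hf_meas.comp measurable_fst
        have h3 : Measurable fun p : Ω × (Fin n → Ω) => ∑ j, f (p.2 j) :=
          (sum_meas hf_meas).comp measurable_snd
        exact (h2.div (h2.add h3)).aestronglyMeasurable
      · intro p
        have hd : 0 < f p.1 + ∑ j, f (p.2 j) := by
          have : (0:ℝ) ≤ ∑ j, f (p.2 j) := Finset.sum_nonneg fun j _ => (hf_pos _).le
          have := hf_pos p.1
          linarith
        rw [abs_div, abs_of_pos (hf_pos _), abs_of_pos hd, div_le_one hd]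
        have : (0:ℝ) ≤ ∑ j, f (p.2 j) := Finset.sum_nonneg fun j _ => (hf_pos _).le
        linarith
    have step1 : ∫ z, q z * (∫ y : Fin n → Ω,
        (∏ j, q (y j)) * (f z / (f z + ∑ j, f (y j))) ∂Pn) ∂μ
        = ∫ p : Ω × (Fin n → Ω),
          (q p.1 * ∏ j, q (p.2 j)) * (f p.1 / (f p.1 + ∑ j, f (p.2 j))) ∂(μ.prod Pn) := by
      have hmid : ∫ z, q z * (∫ y : Fin n → Ω,
          (∏ j, q (y j)) * (f z / (f z + ∑ j, f (y j))) ∂Pn) ∂μ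
          = ∫ z, ∫ y : Fin n → Ω,
            (q z * ∏ j, q (y j)) * (f z / (f z + ∑ j, f (y j))) ∂Pn ∂μ := by
        refine integral_congr_ae (Filter.Eventually.of_forall fun z => ?_)
        show q z * (∫ y : Fin n → Ω,
            (∏ j, q (y j)) * (f z / (f z + ∑ j, f (y j))) ∂Pn)
          = ∫ y : Fin n → Ω, (q z * ∏ j, q (y j)) * (f z / (f z + ∑ j, f (y j))) ∂Pn
        rw [← integral_const_mul]
        refine integral_congr_ae (Filter.Eventually.of_forall fun y => ?_)
        show q z * ((∏ j, q (y j)) * (f z / (f z + ∑ j, f (y j))))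
          = (q z * ∏ j, q (y j)) * (f z / (f z + ∑ j, f (y j)))
        ring
      rw [hmid]
      exact integral_integral (f := fun z (y : Fin n → Ω) =>
        (q z * ∏ j, q (y j)) * (f z / (f z + ∑ j, f (y j)))) hH_int
    rw [step1, ← (mp0.symm).integral_comp' (G 0)]
    refine integral_congr_ae (Filter.Eventually.of_forall fun p => ?_)
    show (q p.1 * ∏ j, q (p.2 j)) * (f p.1 / (f p.1 + ∑ j, f (p.2 j)))
      = G 0 ((MeasurableEquiv.piFinSuccAbove (fun _ : Fin (n + 1) => Ω) 0).symm p)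
    rw [hG]
    simp only [MeasurableEquiv.piFinSuccAbove_symm_apply, Fin.insertNthEquiv,
      Fin.insertNth_zero]
    rw [Fin.prod_univ_succ, Fin.sum_univ_succ]
    simp [Fin.cons_zero, Fin.cons_succ]
  -- final assembly
  have hfinal : ∫ z, ((n + 1 : ℕ) : ℝ) * q z * (∫ y : Fin n → Ω,
      (∏ j, q (y j)) * (f z / (f z + ∑ j, f (y j))) ∂Pn) ∂μ
      = ((n + 1 : ℕ) : ℝ) * ∫ z, q z * (∫ y : Fin n → Ω,
      (∏ j, q (y j)) * (f z / (f z + ∑ j, f (y j))) ∂Pn) ∂μ := by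
    rw [← integral_const_mul]
    refine integral_congr_ae (Filter.Eventually.of_forall fun z => ?_)
    ring
  rw [hfinal, step12, hG0]
  field_simp

end Stmt15Aux
namespace Stmt15

variable {Ω : Type*} [MeasurableSpace Ω]

/-- Energy-based distribution `π(z) = q(z) e^{T(z)} / 𝒵`. -/
def piEB (μ : Measure Ω) (q T : Ω → ℝ) (z : Ω) : ℝ :=
  q z * exp (T z) / ∫ ω, q ω * exp (T ω) ∂μ

/-- Marginal SNIS density of GIWAE: the law of the sample selected by softmax
self-normalized importance sampling among `K` i.i.d. draws from `q` with critic `T`. -/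
def rhoK (μ : Measure Ω) (q T : Ω → ℝ) (K : ℕ) (z : Ω) : ℝ :=
  (K : ℝ) * q z *
    ∫ y : Fin (K - 1) → Ω,
      (∏ j, q (y j)) * (exp (T z) / (exp (T z) + ∑ j, exp (T (y j))))
      ∂(Measure.pi fun _ : Fin (K - 1) => μ)

/-- Convergence of the GIWAE marginal SNIS distribution to the energy-based posterior. -/
theorem giwae_snis_convergence
    (μ : Measure Ω) [SigmaFinite μ] (q T : Ω → ℝ)
    (hq_meas : Measurable q) (hq_nonneg : ∀ ω, 0 ≤ q ω)
    (hq_pos : ∀ᵐ ω ∂μ, 0 < q ω) (hq_norm : ∫ ω, q ω ∂μ = 1)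
    (hT_meas : Measurable T) (hT_bdd : ∃ C : ℝ, ∀ ω, |T ω| ≤ C)
    (hZ_int : Integrable (fun ω => q ω * exp (T ω)) μ)
    (hZ_pos : 0 < ∫ ω, q ω * exp (T ω) ∂μ) :
    (∀ K : ℕ, 1 ≤ K →
      (∀ z, 0 ≤ rhoK μ q T K z) ∧ ∫ z, rhoK μ q T K z ∂μ = 1) ∧
    Tendsto (fun K : ℕ => ∫ z, rhoK μ q T K z * log (rhoK μ q T K z / piEB μ q T z) ∂μ)
      atTop (nhds 0) ∧
    Tendsto (fun K : ℕ => ∫ z, piEB μ q T z * log (piEB μ q T z / rhoK μ q T K z) ∂μ)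
      atTop (nhds 0) := by
  classical
  obtain ⟨C, hC⟩ := hT_bdd
  set f : Ω → ℝ := fun ω => Real.exp (T ω) with hf_def
  have hf_meas : Measurable f := Real.measurable_exp.comp hT_meas
  set a : ℝ := Real.exp (-C) with ha_def
  set b : ℝ := Real.exp C with hb_def
  have ha : 0 < a := Real.exp_pos _
  have hb : 0 < b := Real.exp_pos _
  have haf : ∀ ω, a ≤ f ω := fun ω => Real.exp_le_exp.2 (abs_le.1 (hC ω)).1
  have hfb : ∀ ω, f ω ≤ b := fun ω => Real.exp_le_exp.2 ((abs_le.1 (hC ω)).2)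
  have hf_pos : ∀ ω, 0 < f ω := fun ω => Real.exp_pos _
  set Z : ℝ := ∫ ω, q ω * Real.exp (T ω) ∂μ with hZ_def
  have hZpos : 0 < Z := hZ_pos
  have hq_int : Integrable q μ := by
    by_contra h
    rw [integral_undef h] at hq_norm
    norm_num at hq_norm
  have hqf_int : Integrable (fun ω => q ω * f ω) μ := hZ_int
  have hfZb : ∀ ω, |f ω - Z| ≤ b + Z := fun ω =>
    abs_le.2 ⟨by nlinarith [hf_pos ω, hfb ω], by nlinarith [hf_pos ω, hfb ω]⟩
  set V2 : ℝ := ∫ ω, q ω * (f ω - Z) ^ 2 ∂μ with hV2_def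
  have hV2_nonneg : 0 ≤ V2 :=
    integral_nonneg fun ω => mul_nonneg (hq_nonneg ω) (sq_nonneg _)
  -- part 1
  have part1 : ∀ K : ℕ, 1 ≤ K →
      (∀ z, 0 ≤ rhoK μ q T K z) ∧ ∫ z, rhoK μ q T K z ∂μ = 1 := by
    intro K hK
    obtain ⟨n, rfl⟩ : ∃ n, K = n + 1 := ⟨K - 1, (Nat.succ_pred_eq_of_pos hK).symm⟩
    constructor
    · intro z
      show 0 ≤ ((n + 1 : ℕ) : ℝ) * q z * ∫ y : Fin n → Ω,
        (∏ j, q (y j)) * (f z / (f z + ∑ j, f (y j))) ∂(Measure.pi fun _ : Fin n => μ)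
      have hw : 0 ≤ ∫ y : Fin n → Ω,
          (∏ j, q (y j)) * (f z / (f z + ∑ j, f (y j))) ∂(Measure.pi fun _ : Fin n => μ) :=
        integral_nonneg fun y => mul_nonneg (Finset.prod_nonneg fun j _ => hq_nonneg _)
          (div_nonneg (hf_pos z).le (add_nonneg (hf_pos z).le
            (Finset.sum_nonneg fun j _ => (hf_pos _).le)))
      exact mul_nonneg (mul_nonneg (Nat.cast_nonneg _) (hq_nonneg z)) hw
    · exact Stmt15Aux.norm_one (n := n) hq_meas hq_nonneg hq_int hq_norm hf_meas hf_pos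
  -- epsilon and its convergence
  set ε : ℕ → ℝ := fun K =>
    ((Real.sqrt K + (K : ℝ) * V2 / Real.sqrt K) / 2 + Z + b) / ((K : ℝ) * a) with hε_def
  have hsqrt_atTop : Tendsto Real.sqrt atTop atTop := by
    apply Filter.tendsto_atTop_atTop.2
    intro bb
    refine ⟨max 0 bb ^ 2, fun x hx => ?_⟩
    calc bb ≤ max 0 bb := le_max_right _ _
      _ = Real.sqrt (max 0 bb ^ 2) := (Real.sqrt_sq (le_max_left _ _)).symm
      _ ≤ Real.sqrt x := Real.sqrt_le_sqrt hx
  have h1 : Tendsto (fun K : ℕ => (Real.sqrt K)⁻¹) atTop (nhds 0) :=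
    (hsqrt_atTop.comp tendsto_natCast_atTop_atTop).inv_tendsto_atTop
  have h2 : Tendsto (fun K : ℕ => ((K : ℝ))⁻¹) atTop (nhds 0) :=
    tendsto_inv_atTop_nhds_zero_nat
  have hε_tendsto : Tendsto ε atTop (nhds 0) := by
    have hlim : Tendsto (fun K : ℕ => (1 + V2) / (2 * a) * (Real.sqrt K)⁻¹
        + ((Z + b) / a) * ((K : ℝ))⁻¹) atTop (nhds 0) := by
      have := (h1.const_mul ((1 + V2) / (2 * a))).add (h2.const_mul ((Z + b) / a))
      simpa using this
    refine Tendsto.congr' ?_ hlim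
    filter_upwards [eventually_ge_atTop 1] with K hK
    have hKpos : (0 : ℝ) < (K : ℝ) := by exact_mod_cast hK
    obtain ⟨s, hs_eq⟩ : ∃ s, Real.sqrt (K : ℝ) = s := ⟨_, rfl⟩
    have hs : 0 < s := hs_eq ▸ Real.sqrt_pos.2 hKpos
    have hsq : s * s = (K : ℝ) := by rw [← hs_eq]; exact Real.mul_self_sqrt hKpos.le
    show (1 + V2) / (2 * a) * (Real.sqrt K)⁻¹ + ((Z + b) / a) * ((K : ℝ))⁻¹
      = ((Real.sqrt K + (K : ℝ) * V2 / Real.sqrt K) / 2 + Z + b) / ((K : ℝ) * a)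
    rw [hs_eq, ← hsq]
    field_simp
    ring
  -- main eventual bounds
  have hπ_eq : ∀ z, piEB μ q T z = q z * f z / Z := fun z => rfl
  have hπ_int : Integrable (piEB μ q T) μ := hZ_int.div_const _
  have hπ_nonneg : ∀ z, 0 ≤ piEB μ q T z := fun z => by
    rw [hπ_eq]
    exact div_nonneg (mul_nonneg (hq_nonneg z) (hf_pos z).le) hZpos.le
  have hπ_meas : Measurable (piEB μ q T) := by
    have : Measurable fun z => q z * f z / Z := (hq_meas.mul hf_meas).div_const _
    exact this
  have hπ_norm : ∫ z, piEB μ q T z ∂μ = 1 := by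
    have : ∫ z, piEB μ q T z ∂μ = ∫ z, q z * f z / Z ∂μ := rfl
    rw [this, integral_div, ← hZ_def, div_self hZpos.ne']
  have hKL : ∀ᶠ K : ℕ in atTop,
      |∫ z, rhoK μ q T K z * Real.log (rhoK μ q T K z / piEB μ q T z) ∂μ| ≤ 3 * ε K ∧
      |∫ z, piEB μ q T z * Real.log (piEB μ q T z / rhoK μ q T K z) ∂μ| ≤ 2 * ε K := by
    filter_upwards [eventually_ge_atTop 1,
      hε_tendsto.eventually (gt_mem_nhds (by norm_num : (0 : ℝ) < 1 / 2))] with K hK1 hKhalf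
    have hεhalf : ε K ≤ 1 / 2 := le_of_lt hKhalf
    obtain ⟨n, rfl⟩ : ∃ n, K = n + 1 := ⟨K - 1, (Nat.succ_pred_eq_of_pos hK1).symm⟩
    set W : Ω → ℝ := fun z => ∫ y : Fin n → Ω,
      (∏ j, q (y j)) * (f z / (f z + ∑ j, f (y j))) ∂(Measure.pi fun _ : Fin n => μ)
      with hW_def
    have hW_meas : Measurable W := Stmt15Aux.w_meas hq_meas hf_meas
    set r : Ω → ℝ := fun z => ((n + 1 : ℕ) : ℝ) * Z * W z / f z with hr_def
    have hr_meas : Measurable r := (measurable_const.mul hW_meas).div hf_meas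
    have hKpos : (0 : ℝ) < ((n + 1 : ℕ) : ℝ) := by exact_mod_cast Nat.succ_pos n
    have hsqpos : 0 < Real.sqrt ((n + 1 : ℕ) : ℝ) := Real.sqrt_pos.2 hKpos
    have hA := Stmt15Aux.abs_moment_le (n := n) (μ := μ) (t := Real.sqrt ((n + 1 : ℕ) : ℝ))
      hq_meas hq_nonneg hq_int hq_norm hf_meas hfZb hqf_int hZ_def.symm hV2_def hsqpos
    have hεK : ((∫ y : Fin n → Ω, (∏ j, q (y j)) * |(∑ j, f (y j)) - (n : ℝ) * Z|
        ∂(Measure.pi fun _ : Fin n => μ)) + Z + b) / (((n + 1 : ℕ) : ℝ) * a) ≤ ε (n + 1) := by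
      have hcast : (n : ℝ) ≤ ((n + 1 : ℕ) : ℝ) := by push_cast; linarith
      have hmono : (n : ℝ) * V2 / Real.sqrt ((n + 1 : ℕ) : ℝ)
          ≤ ((n + 1 : ℕ) : ℝ) * V2 / Real.sqrt ((n + 1 : ℕ) : ℝ) :=
        (div_le_div_iff_of_pos_right hsqpos).2 (mul_le_mul_of_nonneg_right hcast hV2_nonneg)
      have hnum_le : (∫ y : Fin n → Ω, (∏ j, q (y j)) * |(∑ j, f (y j)) - (n : ℝ) * Z|
          ∂(Measure.pi fun _ : Fin n => μ)) + Z + b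
          ≤ (Real.sqrt ((n + 1 : ℕ) : ℝ)
            + ((n + 1 : ℕ) : ℝ) * V2 / Real.sqrt ((n + 1 : ℕ) : ℝ)) / 2 + Z + b := by
        linarith [hA]
      show _ ≤ ((Real.sqrt ((n + 1 : ℕ) : ℝ) + ((n + 1 : ℕ) : ℝ) * V2
        / Real.sqrt ((n + 1 : ℕ) : ℝ)) / 2 + Z + b) / (((n + 1 : ℕ) : ℝ) * a)
      exact (div_le_div_iff_of_pos_right (mul_pos hKpos ha)).2 hnum_le
    have hrb : ∀ z, |r z - 1| ≤ ε (n + 1) := by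
      intro z
      have h1 := Stmt15Aux.ratio_bound (n := n) (μ := μ) hq_nonneg hq_int hq_norm
        hf_meas ha haf hfb hZpos z
      have hfz := hf_pos z
      have hdiff : r z - 1 = (((n + 1 : ℕ) : ℝ) * Z * W z - f z) / f z := by
        rw [hr_def]
        field_simp
      rw [hdiff, abs_div, abs_of_pos hfz, div_le_iff₀ hfz]
      calc |((n + 1 : ℕ) : ℝ) * Z * W z - f z|
          ≤ f z * (((∫ y : Fin n → Ω, (∏ j, q (y j)) * |(∑ j, f (y j)) - (n : ℝ) * Z|
            ∂(Measure.pi fun _ : Fin n => μ)) + Z + b) / (((n + 1 : ℕ) : ℝ) * a)) := h1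
        _ ≤ f z * ε (n + 1) := mul_le_mul_of_nonneg_left hεK hfz.le
        _ = ε (n + 1) * f z := mul_comm _ _
    have hrho_def : ∀ z, rhoK μ q T (n + 1) z = ((n + 1 : ℕ) : ℝ) * q z * W z := fun z => rfl
    have hrho_eq : ∀ z, rhoK μ q T (n + 1) z = piEB μ q T z * r z := by
      intro z
      rw [hrho_def, hπ_eq, hr_def]
      have hfz := (hf_pos z).ne'
      field_simp
    have hr_halfpos : ∀ z, 0 < r z := by
      intro z
      have := abs_le.1 (hrb z)
      have h := this.1
      nlinarith [hεhalf]
    have hπ_pos_of : ∀ z, q z ≠ 0 → 0 < piEB μ q T z := by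
      intro z hqz
      rw [hπ_eq]
      exact div_pos (mul_pos (lt_of_le_of_ne (hq_nonneg z) (Ne.symm hqz)) (hf_pos z)) hZpos
    have hpt1 : ∀ z, rhoK μ q T (n + 1) z * Real.log (rhoK μ q T (n + 1) z / piEB μ q T z)
        = piEB μ q T z * (r z * Real.log (r z)) := by
      intro z
      by_cases hqz : q z = 0
      · have hρ : rhoK μ q T (n + 1) z = 0 := by simp [hrho_def z, hqz]
        have hπ : piEB μ q T z = 0 := by simp [hπ_eq z, hqz]
        rw [hρ, hπ]
        simp
      · have hπpos := hπ_pos_of z hqz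
        rw [hrho_eq z, mul_div_cancel_left₀ _ hπpos.ne']
        ring
    have hpt2 : ∀ z, piEB μ q T z * Real.log (piEB μ q T z / rhoK μ q T (n + 1) z)
        = piEB μ q T z * (-Real.log (r z)) := by
      intro z
      by_cases hqz : q z = 0
      · have hπ : piEB μ q T z = 0 := by simp [hπ_eq z, hqz]
        rw [hπ]
        simp
      · have hπpos := hπ_pos_of z hqz
        rw [hrho_eq z, div_mul_cancel_left₀ hπpos.ne', Real.log_inv]
    have hlogs : ∀ z, |Real.log (r z)| ≤ 2 * ε (n + 1) ∧
        |r z * Real.log (r z)| ≤ 3 * ε (n + 1) :=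
      fun z => Stmt15Aux.log_abs_le (hrb z) hεhalf
    constructor
    · -- first KL divergence
      have he : (∫ z, rhoK μ q T (n + 1) z
            * Real.log (rhoK μ q T (n + 1) z / piEB μ q T z) ∂μ)
          = ∫ z, piEB μ q T z * (r z * Real.log (r z)) ∂μ :=
        integral_congr_ae (Filter.Eventually.of_forall hpt1)
      have hbd : ∀ z, ‖piEB μ q T z * (r z * Real.log (r z))‖
          ≤ 3 * ε (n + 1) * piEB μ q T z := by
        intro z
        rw [Real.norm_eq_abs, abs_mul, abs_of_nonneg (hπ_nonneg z)]
        calc piEB μ q T z * |r z * Real.log (r z)|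
            ≤ piEB μ q T z * (3 * ε (n + 1)) :=
              mul_le_mul_of_nonneg_left (hlogs z).2 (hπ_nonneg z)
          _ = 3 * ε (n + 1) * piEB μ q T z := mul_comm _ _
      have hmeas : AEStronglyMeasurable (fun z => piEB μ q T z * (r z * Real.log (r z))) μ :=
        (hπ_meas.mul (hr_meas.mul (Real.measurable_log.comp hr_meas))).aestronglyMeasurable
      have hint : Integrable (fun z => piEB μ q T z * (r z * Real.log (r z))) μ :=
        Integrable.mono' (hπ_int.const_mul (3 * ε (n + 1))) hmeas
          (Filter.Eventually.of_forall hbd)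
      rw [he]
      calc |∫ z, piEB μ q T z * (r z * Real.log (r z)) ∂μ|
          ≤ ∫ z, ‖piEB μ q T z * (r z * Real.log (r z))‖ ∂μ := by
            simpa only [Real.norm_eq_abs] using norm_integral_le_integral_norm
              (μ := μ) (fun z => piEB μ q T z * (r z * Real.log (r z)))
        _ ≤ ∫ z, 3 * ε (n + 1) * piEB μ q T z ∂μ :=
            integral_mono hint.norm (hπ_int.const_mul _) hbd
        _ = 3 * ε (n + 1) := by rw [integral_const_mul, hπ_norm, mul_one]
    · -- second KL divergence
      have he : (∫ z, piEB μ q T z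
            * Real.log (piEB μ q T z / rhoK μ q T (n + 1) z) ∂μ)
          = ∫ z, piEB μ q T z * (-Real.log (r z)) ∂μ :=
        integral_congr_ae (Filter.Eventually.of_forall hpt2)
      have hbd : ∀ z, ‖piEB μ q T z * (-Real.log (r z))‖
          ≤ 2 * ε (n + 1) * piEB μ q T z := by
        intro z
        rw [Real.norm_eq_abs, abs_mul, abs_of_nonneg (hπ_nonneg z), abs_neg]
        calc piEB μ q T z * |Real.log (r z)|
            ≤ piEB μ q T z * (2 * ε (n + 1)) :=
              mul_le_mul_of_nonneg_left (hlogs z).1 (hπ_nonneg z)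
          _ = 2 * ε (n + 1) * piEB μ q T z := mul_comm _ _
      have hmeas : AEStronglyMeasurable (fun z => piEB μ q T z * (-Real.log (r z))) μ :=
        (hπ_meas.mul (Real.measurable_log.comp hr_meas).neg).aestronglyMeasurable
      have hint : Integrable (fun z => piEB μ q T z * (-Real.log (r z))) μ :=
        Integrable.mono' (hπ_int.const_mul (2 * ε (n + 1))) hmeas
          (Filter.Eventually.of_forall hbd)
      rw [he]
      calc |∫ z, piEB μ q T z * (-Real.log (r z)) ∂μ|
          ≤ ∫ z, ‖piEB μ q T z * (-Real.log (r z))‖ ∂μ := by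
            simpa only [Real.norm_eq_abs] using norm_integral_le_integral_norm
              (μ := μ) (fun z => piEB μ q T z * (-Real.log (r z)))
        _ ≤ ∫ z, 2 * ε (n + 1) * piEB μ q T z ∂μ :=
            integral_mono hint.norm (hπ_int.const_mul _) hbd
        _ = 2 * ε (n + 1) := by rw [integral_const_mul, hπ_norm, mul_one]
  refine ⟨part1, ?_, ?_⟩
  · refine squeeze_zero_norm' (a := fun K => 3 * ε K) (hKL.mono fun K h => ?_) ?_
    · rw [Real.norm_eq_abs]
      exact h.1
    · simpa using hε_tendsto.const_mul 3
  · refine squeeze_zero_norm' (a := fun K => 2 * ε K) (hKL.mono fun K h => ?_) ?_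
    · rw [Real.norm_eq_abs]
      exact h.2
    · simpa using hε_tendsto.const_mul 2

end Stmt15
end
end

section
/- (Approximate reverse annealing preserves an upper bound on the log partition function under a KL condition.) The following identity holds: ∫∫ ρ(z)·r(w,z)·log( π̃(z)·r(w,z)/Q(w,z) ) dν(w) dμ(z) = log 𝒵 + D_KL(ρ ‖ Q_Z) − D_KL(ρ ‖ π) + ∫ ρ(z)·D_KL(r(·,z) ‖ Q(·|z)) dμ(z), where D_KL(r(·,z) ‖ Q(·|z)) := ∫ r(w,z)·log(r(w,z)/Q(w|z)) dν(w). Consequently, if D_KL(ρ ‖ Q_Z) ≥ D_KL(ρ ‖ π), then ∫∫ ρ(z)·r(w,z)·log( π̃(z)·r(w,z)/Q(w,z) ) dν dμ ≥ log 𝒵. -/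
open MeasureTheory Real

noncomputable section

namespace Stmt16

variable {W Z : Type*} [MeasurableSpace W] [MeasurableSpace Z]

/-- Final-state marginal `Q_Z(z) = ∫ Q(w,z) dν(w)` of the forward annealing proposal. -/
def QZ (ν : Measure W) (Q : W × Z → ℝ) (z : Z) : ℝ := ∫ w, Q (w, z) ∂ν

/-- Conditional KL divergence `D_KL(r(·,z) ‖ Q(·|z))` between the backward kernel and
the forward posterior kernel, with `Q(w|z) = Q(w,z)/Q_Z(z)`. -/
def DKLcond (ν : Measure W) (Q r : W × Z → ℝ) (z : Z) : ℝ :=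
  ∫ w, r (w, z) * log (r (w, z) / (Q (w, z) / QZ ν Q z)) ∂ν

/-- Approximate reverse annealing preserves an upper bound on the log partition
function under a KL condition. -/
theorem approx_reverse_annealing
    (ν : Measure W) (μ : Measure Z) [SigmaFinite ν] [SigmaFinite μ]
    (ptil : Z → ℝ) (Q r : W × Z → ℝ) (ρ : Z → ℝ)
    (hptil_meas : Measurable ptil) (hptil_pos : ∀ᵐ z ∂μ, 0 < ptil z)
    (hptil_int : Integrable ptil μ)
    (Zc : ℝ) (hZc : Zc = ∫ z, ptil z ∂μ) (hZc_pos : 0 < Zc)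
    (hr_meas : Measurable r) (hr_pos : ∀ᵐ wz ∂(ν.prod μ), 0 < r wz)
    (hr_norm : ∀ᵐ z ∂μ, ∫ w, r (w, z) ∂ν = 1)
    (hQ_meas : Measurable Q) (hQ_pos : ∀ᵐ wz ∂(ν.prod μ), 0 < Q wz)
    (hQ_int : Integrable Q (ν.prod μ)) (hQ_norm : ∫ wz, Q wz ∂(ν.prod μ) = 1)
    (hρ_meas : Measurable ρ) (hρ_pos : ∀ᵐ z ∂μ, 0 < ρ z)
    (hρ_int : Integrable ρ μ) (hρ_norm : ∫ z, ρ z ∂μ = 1)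
    (h_int_main : Integrable
      (fun wz : W × Z => ρ wz.2 * r wz * log (ptil wz.2 * r wz / Q wz)) (ν.prod μ))
    (h_int_klQZ : Integrable (fun z => ρ z * log (ρ z / QZ ν Q z)) μ)
    (h_int_klpi : Integrable (fun z => ρ z * log (ρ z / (ptil z / Zc))) μ)
    (h_int_klcond_inner : ∀ z, Integrable
      (fun w => r (w, z) * log (r (w, z) / (Q (w, z) / QZ ν Q z))) ν)
    (h_int_klcond_outer : Integrable (fun z => ρ z * DKLcond ν Q r z) μ) :
    (∫ wz : W × Z, ρ wz.2 * r wz * log (ptil wz.2 * r wz / Q wz) ∂(ν.prod μ))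
        = log Zc + (∫ z, ρ z * log (ρ z / QZ ν Q z) ∂μ)
          - (∫ z, ρ z * log (ρ z / (ptil z / Zc)) ∂μ)
          + ∫ z, ρ z * DKLcond ν Q r z ∂μ ∧
    ((∫ z, ρ z * log (ρ z / (ptil z / Zc)) ∂μ)
        ≤ (∫ z, ρ z * log (ρ z / QZ ν Q z) ∂μ) →
      log Zc ≤ ∫ wz : W × Z, ρ wz.2 * r wz * log (ptil wz.2 * r wz / Q wz) ∂(ν.prod μ)) := by
  -- ν is not the zero measure
  have hν_ne : ν ≠ 0 := by
    intro h
    rw [h, Measure.zero_prod] at hQ_norm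
    simp at hQ_norm
  -- a.e. z, the slice of r is a.e. positive
  have hr_pos' : ∀ᵐ z ∂μ, ∀ᵐ w ∂ν, 0 < r (w, z) := by
    have hset : MeasurableSet {x : Z × W | 0 < r x.swap} :=
      measurableSet_lt measurable_const (hr_meas.comp measurable_swap)
    have h1 : ∀ᵐ x ∂(μ.prod ν), 0 < r x.swap := by
      rw [← Measure.prod_swap] at hr_pos
      exact (ae_map_iff measurable_swap.aemeasurable
        (measurableSet_lt measurable_const hr_meas)).mp hr_pos
    exact Measure.ae_ae_of_ae_prod h1
  have hQ_pos' : ∀ᵐ z ∂μ, ∀ᵐ w ∂ν, 0 < Q (w, z) := by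
    have h1 : ∀ᵐ x ∂(μ.prod ν), 0 < Q x.swap := by
      rw [← Measure.prod_swap] at hQ_pos
      exact (ae_map_iff measurable_swap.aemeasurable
        (measurableSet_lt measurable_const hQ_meas)).mp hQ_pos
    exact Measure.ae_ae_of_ae_prod h1
  have hQz_int : ∀ᵐ z ∂μ, Integrable (fun w => Q (w, z)) ν := hQ_int.prod_left_ae
  have hmain_slice : ∀ᵐ z ∂μ,
      Integrable (fun w => ρ z * r (w, z) * log (ptil z * r (w, z) / Q (w, z))) ν :=
    h_int_main.prod_left_ae
  -- a.e. z, r(·,z) is integrable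
  have hr_int : ∀ᵐ z ∂μ, Integrable (fun w => r (w, z)) ν := by
    filter_upwards [hr_norm] with z hz
    by_contra h
    rw [integral_undef h] at hz
    norm_num at hz
  -- a.e. z, QZ z > 0
  have hQZ_pos : ∀ᵐ z ∂μ, 0 < QZ ν Q z := by
    filter_upwards [hQ_pos', hQz_int] with z hpos hint
    have hnn : 0 ≤ᵐ[ν] fun w => Q (w, z) := hpos.mono fun w hw => hw.le
    rcases lt_or_eq_of_le (integral_nonneg_of_ae hnn) with h | h
    · exact h
    · exfalso
      have := (integral_eq_zero_iff_of_nonneg_ae hnn hint).mp h.symm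
      have hzero : ∀ᵐ w ∂ν, False := by
        filter_upwards [hpos, this] with w h1 h2
        simp at h2; exact absurd h2 (ne_of_gt h1)
      exact hν_ne (ae_eq_bot.mp (Filter.eventually_false_iff_eq_bot.mp hzero))
  -- key a.e. identity for the inner integral
  have key : ∀ᵐ z ∂μ,
      (∫ w, ρ z * r (w, z) * log (ptil z * r (w, z) / Q (w, z)) ∂ν)
        = ρ z * (log Zc + log (ρ z / QZ ν Q z) - log (ρ z / (ptil z / Zc)))
          + ρ z * DKLcond ν Q r z := by
    filter_upwards [hρ_pos, hptil_pos, hr_norm, hr_int, hQZ_pos, hr_pos', hQ_pos']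
      with z hρz hpz hnorm hrint hQZ hrw hQw
    set C : ℝ := log Zc + log (ρ z / QZ ν Q z) - log (ρ z / (ptil z / Zc)) with hC
    have heq : (fun w => ρ z * r (w, z) * log (ptil z * r (w, z) / Q (w, z)))
        =ᵐ[ν] fun w => (ρ z * C) * r (w, z)
          + ρ z * (r (w, z) * log (r (w, z) / (Q (w, z) / QZ ν Q z))) := by
      filter_upwards [hrw, hQw] with w hr0 hQ0
      have h1 : log (ptil z * r (w, z) / Q (w, z))
          = log (ptil z) + log (r (w, z)) - log (Q (w, z)) := by
        rw [log_div (by positivity) (ne_of_gt hQ0), log_mul (ne_of_gt hpz) (ne_of_gt hr0)]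
      have h2 : log (r (w, z) / (Q (w, z) / QZ ν Q z))
          = log (r (w, z)) - (log (Q (w, z)) - log (QZ ν Q z)) := by
        rw [log_div (ne_of_gt hr0) (by positivity), log_div (ne_of_gt hQ0) (ne_of_gt hQZ)]
      have h3 : log (ρ z / QZ ν Q z) = log (ρ z) - log (QZ ν Q z) :=
        log_div (ne_of_gt hρz) (ne_of_gt hQZ)
      have h4 : log (ρ z / (ptil z / Zc)) = log (ρ z) - (log (ptil z) - log Zc) := by
        rw [log_div (ne_of_gt hρz) (by positivity), log_div (ne_of_gt hpz) (ne_of_gt hZc_pos)]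
      rw [h1, h2, hC, h3, h4]; ring
    rw [integral_congr_ae heq, integral_add (hrint.const_mul _)
      ((h_int_klcond_inner z).const_mul _), integral_const_mul, integral_const_mul, hnorm,
      mul_one, DKLcond]
  -- Fubini
  have hfub : (∫ wz : W × Z, ρ wz.2 * r wz * log (ptil wz.2 * r wz / Q wz) ∂(ν.prod μ))
      = ∫ z, ∫ w, ρ z * r (w, z) * log (ptil z * r (w, z) / Q (w, z)) ∂ν ∂μ :=
    integral_prod_symm _ h_int_main
  have hmainId : (∫ wz : W × Z, ρ wz.2 * r wz * log (ptil wz.2 * r wz / Q wz) ∂(ν.prod μ))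
      = log Zc + (∫ z, ρ z * log (ρ z / QZ ν Q z) ∂μ)
          - (∫ z, ρ z * log (ρ z / (ptil z / Zc)) ∂μ)
          + ∫ z, ρ z * DKLcond ν Q r z ∂μ := by
    rw [hfub, integral_congr_ae key]
    have hfn : (fun z => ρ z * (log Zc + log (ρ z / QZ ν Q z) - log (ρ z / (ptil z / Zc)))
        + ρ z * DKLcond ν Q r z)
        = fun z => (log Zc * ρ z + (ρ z * log (ρ z / QZ ν Q z)
            - ρ z * log (ρ z / (ptil z / Zc)))) + ρ z * DKLcond ν Q r z := by
      funext z; ring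
    have h1' : Integrable (fun z => log Zc * ρ z) μ := hρ_int.const_mul _
    have h2' : Integrable
        (fun z => ρ z * log (ρ z / QZ ν Q z) - ρ z * log (ρ z / (ptil z / Zc))) μ :=
      h_int_klQZ.sub h_int_klpi
    have h12 : Integrable (fun z => log Zc * ρ z
        + (ρ z * log (ρ z / QZ ν Q z) - ρ z * log (ρ z / (ptil z / Zc)))) μ := h1'.add h2'
    rw [hfn, integral_add h12 h_int_klcond_outer, integral_add h1' h2',
      integral_const_mul, hρ_norm, mul_one, integral_sub h_int_klQZ h_int_klpi]
    ring
  refine ⟨hmainId, fun hKL => ?_⟩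
  -- nonnegativity of the conditional KL term
  have hDKL_nonneg : 0 ≤ ∫ z, ρ z * DKLcond ν Q r z ∂μ := by
    apply integral_nonneg_of_ae
    filter_upwards [hρ_pos, hr_pos', hQ_pos', hQZ_pos, hr_int, hr_norm, hQz_int]
      with z hρz hrw hQw hQZ hrint hnorm hQint
    apply mul_nonneg hρz.le
    rw [DKLcond]
    have hQdiv_int : Integrable (fun w => Q (w, z) / QZ ν Q z) ν := hQint.div_const _
    have hmono : (fun w => r (w, z) - Q (w, z) / QZ ν Q z)
        ≤ᵐ[ν] fun w => r (w, z) * log (r (w, z) / (Q (w, z) / QZ ν Q z)) := by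
      filter_upwards [hrw, hQw] with w hr0 hQ0
      have hq0 : 0 < Q (w, z) / QZ ν Q z := by positivity
      have hlog : log ((Q (w, z) / QZ ν Q z) / r (w, z))
          ≤ (Q (w, z) / QZ ν Q z) / r (w, z) - 1 :=
        log_le_sub_one_of_pos (by positivity)
      have hloginv : log ((Q (w, z) / QZ ν Q z) / r (w, z))
          = - log (r (w, z) / (Q (w, z) / QZ ν Q z)) := by
        rw [← log_inv, inv_div]
      rw [hloginv] at hlog
      have := mul_le_mul_of_nonneg_left hlog hr0.le
      rw [mul_sub, mul_div_cancel₀ _ (ne_of_gt hr0)] at this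
      nlinarith
    have hIntq : ∫ w, Q (w, z) / QZ ν Q z ∂ν = 1 := by
      rw [integral_div]
      exact div_self (ne_of_gt hQZ)
    calc (0 : ℝ) = ∫ w, (r (w, z) - Q (w, z) / QZ ν Q z) ∂ν := by
          rw [integral_sub hrint hQdiv_int, hnorm, hIntq]; ring
      _ ≤ _ := integral_mono_ae (hrint.sub hQdiv_int) (h_int_klcond_inner z) hmono
  rw [hmainId]
  linarith

end Stmt16
end
end

section
/- (Ordering of the energy-based mutual-information lower bounds.) For every measurable critic T : X × Z → ℝ (with 𝒵_T(x) ∈ (0,∞) a.e. and 𝒵_T ∈ (0,∞)): I(x;z) ≥ IBAL(q,T) ≥ I_GMINE-DV(q,T) ≥ I_GMINE-F(q,T). -/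
open MeasureTheory Real

noncomputable section

namespace Stmt17

variable {X Z : Type*} [MeasurableSpace X] [MeasurableSpace Z]

/-- Marginal density `p_X(x) = ∫ p(x,z) dμ_Z(z)`. -/
def pX (μZ : Measure Z) (p : X × Z → ℝ) (x : X) : ℝ := ∫ z, p (x, z) ∂μZ

/-- Marginal density `p_Z(z) = ∫ p(x,z) dμ_X(x)`. -/
def pZ (μX : Measure X) (p : X × Z → ℝ) (z : Z) : ℝ := ∫ x, p (x, z) ∂μX

/-- Mutual information `I(x;z)`. -/
def MI (μX : Measure X) (μZ : Measure Z) (p : X × Z → ℝ) : ℝ :=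
  ∫ w, p w * log (p w / (pX μZ p w.1 * pZ μX p w.2)) ∂(μX.prod μZ)

/-- Barber–Agakov lower bound `I_BA_L(q) = ∫∫ p(x,z) log(q(z|x)/p_Z(z))`. -/
def IBAL (μX : Measure X) (μZ : Measure Z) (p q : X × Z → ℝ) : ℝ :=
  ∫ w, p w * log (q w / pZ μX p w.2) ∂(μX.prod μZ)

/-- Conditional partition function `𝒵_T(x) = ∫ q(z|x) e^{T(x,z)} dμ_Z(z)`. -/
def ZT (μZ : Measure Z) (q T : X × Z → ℝ) (x : X) : ℝ :=
  ∫ z, q (x, z) * exp (T (x, z)) ∂μZ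

/-- Joint partition function `𝒵_T = ∫∫ p_X(x) q(z|x) e^{T(x,z)}`. -/
def ZTtot (μX : Measure X) (μZ : Measure Z) (p q T : X × Z → ℝ) : ℝ :=
  ∫ w, pX μZ p w.1 * q w * exp (T w) ∂(μX.prod μZ)

/-- Implicit Barber–Agakov lower bound. -/
def IBALT (μX : Measure X) (μZ : Measure Z) (p q T : X × Z → ℝ) : ℝ :=
  IBAL μX μZ p q + (∫ w, p w * T w ∂(μX.prod μZ))
    - ∫ x, pX μZ p x * log (ZT μZ q T x) ∂μX

/-- Generalized MINE-DV lower bound. -/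
def IGMINEDV (μX : Measure X) (μZ : Measure Z) (p q T : X × Z → ℝ) : ℝ :=
  IBAL μX μZ p q + (∫ w, p w * T w ∂(μX.prod μZ)) - log (ZTtot μX μZ p q T)

/-- Generalized MINE-F lower bound. -/
def IGMINEF (μX : Measure X) (μZ : Measure Z) (p q T : X × Z → ℝ) : ℝ :=
  IBAL μX μZ p q + (∫ w, p w * T w ∂(μX.prod μZ))
    - ∫ w, pX μZ p w.1 * q w * exp (T w - 1) ∂(μX.prod μZ)

/-- Ordering of the energy-based mutual-information lower bounds. -/
theorem energy_bounds_ordering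
    (μX : Measure X) (μZ : Measure Z) [SigmaFinite μX] [SigmaFinite μZ]
    (p q T : X × Z → ℝ)
    (hp_meas : Measurable p)
    (hp_pos : ∀ᵐ w ∂(μX.prod μZ), 0 < p w)
    (hp_int : Integrable p (μX.prod μZ))
    (hp_norm : ∫ w, p w ∂(μX.prod μZ) = 1)
    (hq_meas : Measurable q)
    (hq_pos : ∀ᵐ w ∂(μX.prod μZ), 0 < q w)
    (hq_norm : ∀ x, ∫ z, q (x, z) ∂μZ = 1)
    (hT_meas : Measurable T)
    (hZT_int : ∀ᵐ x ∂μX, Integrable (fun z => q (x, z) * exp (T (x, z))) μZ)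
    (hZT_pos : ∀ᵐ x ∂μX, 0 < ZT μZ q T x)
    (hZTtot_int : Integrable (fun w => pX μZ p w.1 * q w * exp (T w)) (μX.prod μZ))
    (hZTtot_pos : 0 < ZTtot μX μZ p q T)
    (h_int_mi : Integrable (fun w => p w * log (p w / (pX μZ p w.1 * pZ μX p w.2)))
      (μX.prod μZ))
    (h_int_ba : Integrable (fun w => p w * log (q w / pZ μX p w.2)) (μX.prod μZ))
    (h_int_pT : Integrable (fun w => p w * T w) (μX.prod μZ))
    (h_int_pXlogZ : Integrable (fun x => pX μZ p x * log (ZT μZ q T x)) μX)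
    (h_int_gminef : Integrable (fun w => pX μZ p w.1 * q w * exp (T w - 1)) (μX.prod μZ)) :
    IGMINEF μX μZ p q T ≤ IGMINEDV μX μZ p q T ∧
    IGMINEDV μX μZ p q T ≤ IBALT μX μZ p q T ∧
    IBALT μX μZ p q T ≤ MI μX μZ p := by
  classical
  -- abbreviations
  set μ := μX.prod μZ with hμ
  set c := ZTtot μX μZ p q T with hc
  -- nondegeneracy
  have hμX_ne : μX ≠ 0 := by
    intro h
    have h0 : (0 : ℝ) < ZTtot μX μZ p q T := hc ▸ hZTtot_pos
    unfold ZTtot at h0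
    rw [h, Measure.zero_prod, integral_zero_measure] at h0
    exact lt_irrefl 0 h0
  have hμZ_ne : μZ ≠ 0 := by
    intro h
    have h0 : (0 : ℝ) < ZTtot μX μZ p q T := hc ▸ hZTtot_pos
    unfold ZTtot at h0
    rw [h, Measure.prod_zero, integral_zero_measure] at h0
    exact lt_irrefl 0 h0
  -- slices of positivity
  have hp_sl : ∀ᵐ x ∂μX, ∀ᵐ z ∂μZ, 0 < p (x, z) := Measure.ae_ae_of_ae_prod hp_pos
  have hq_sl : ∀ᵐ x ∂μX, ∀ᵐ z ∂μZ, 0 < q (x, z) := Measure.ae_ae_of_ae_prod hq_pos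
  have hp_sl' : ∀ᵐ z ∂μZ, ∀ᵐ x ∂μX, 0 < p (x, z) := by
    have h1 : ∀ᵐ w ∂(μZ.prod μX), 0 < p w.swap :=
      (Measure.measurePreserving_swap (μ := μZ) (ν := μX)).quasiMeasurePreserving.ae hp_pos
    exact Measure.ae_ae_of_ae_prod h1
  -- basic facts about pX
  have hpX_nn : ∀ᵐ x ∂μX, 0 ≤ pX μZ p x := by
    filter_upwards [hp_sl] with x hx
    exact integral_nonneg_of_ae (hx.mono fun z hz => hz.le)
  have hpX_int : Integrable (pX μZ p) μX := hp_int.integral_prod_left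
  have hpX_norm : ∫ x, pX μZ p x ∂μX = 1 := by
    rw [← hp_norm, integral_prod _ hp_int]; rfl
  have hpX_pos : ∀ᵐ x ∂μX, 0 < pX μZ p x := by
    filter_upwards [hp_int.prod_right_ae, hp_sl] with x hint hpos
    have hnn : 0 ≤ᵐ[μZ] fun z => p (x, z) := hpos.mono fun z hz => hz.le
    rcases (integral_nonneg_of_ae hnn).lt_or_eq with h | h
    · exact h
    · exfalso
      have h0 : (fun z => p (x, z)) =ᵐ[μZ] 0 :=
        (integral_eq_zero_iff_of_nonneg_ae hnn hint).mp h.symm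
      have : ∀ᵐ z ∂μZ, False := by
        filter_upwards [h0, hpos] with z h1 h2
        rw [h1] at h2; exact lt_irrefl 0 h2
      exact hμZ_ne (ae_eq_bot.mp (Filter.eventually_false_iff_eq_bot.mp this))
  have hpZ_pos : ∀ᵐ z ∂μZ, 0 < pZ μX p z := by
    filter_upwards [hp_int.prod_left_ae, hp_sl'] with z hint hpos
    have hnn : 0 ≤ᵐ[μX] fun x => p (x, z) := hpos.mono fun x hx => hx.le
    rcases (integral_nonneg_of_ae hnn).lt_or_eq with h | h
    · exact h
    · exfalso
      have h0 : (fun x => p (x, z)) =ᵐ[μX] 0 :=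
        (integral_eq_zero_iff_of_nonneg_ae hnn hint).mp h.symm
      have : ∀ᵐ x ∂μX, False := by
        filter_upwards [h0, hpos] with x h1 h2
        rw [h1] at h2; exact lt_irrefl 0 h2
      exact hμX_ne (ae_eq_bot.mp (Filter.eventually_false_iff_eq_bot.mp this))
  -- measurability
  have hpX_meas : Measurable (pX μZ p) :=
    hp_meas.stronglyMeasurable.integral_prod_right'.measurable
  have hZT_meas : Measurable (ZT μZ q T) :=
    ((hq_meas.mul (Real.measurable_exp.comp hT_meas)).stronglyMeasurable.integral_prod_right').measurable
  -- lifted positivity to the product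
  have hpXpos' : ∀ᵐ w ∂μ, 0 < pX μZ p w.1 := Measure.quasiMeasurePreserving_fst.ae hpX_pos
  have hZTpos' : ∀ᵐ w ∂μ, 0 < ZT μZ q T w.1 := Measure.quasiMeasurePreserving_fst.ae hZT_pos
  have hpZpos' : ∀ᵐ w ∂μ, 0 < pZ μX p w.2 := Measure.quasiMeasurePreserving_snd.ae hpZ_pos
  ---------------------------------------------------------------------------
  -- Part 1 : IGMINEF ≤ IGMINEDV
  ---------------------------------------------------------------------------
  have h1 : IGMINEF μX μZ p q T ≤ IGMINEDV μX μZ p q T := by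
    have heq : (∫ w, pX μZ p w.1 * q w * exp (T w - 1) ∂μ) = c / Real.exp 1 := by
      rw [hc, ZTtot, ← integral_div]
      refine integral_congr_ae (Filter.Eventually.of_forall fun w => ?_)
      simp only [Real.exp_sub]
      ring
    have hpos : 0 < c / Real.exp 1 := div_pos hZTtot_pos (Real.exp_pos 1)
    have h := Real.log_le_sub_one_of_pos hpos
    rw [Real.log_div hZTtot_pos.ne' (Real.exp_ne_zero 1), Real.log_exp] at h
    have : log c ≤ ∫ w, pX μZ p w.1 * q w * exp (T w - 1) ∂μ := by
      rw [heq]; linarith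
    unfold IGMINEF IGMINEDV
    rw [← hc, ← hμ]
    linarith
  ---------------------------------------------------------------------------
  -- Part 2 : IGMINEDV ≤ IBALT
  ---------------------------------------------------------------------------
  have hZTtot_eq : c = ∫ x, pX μZ p x * ZT μZ q T x ∂μX := by
    rw [hc, ZTtot, integral_prod _ hZTtot_int]
    refine integral_congr_ae (Filter.Eventually.of_forall fun x => ?_)
    simp_rw [mul_assoc]
    rw [integral_const_mul]; rfl
  have hpXZT_int : Integrable (fun x => pX μZ p x * ZT μZ q T x) μX := by
    have h := hZTtot_int.integral_prod_left
    refine h.congr (Filter.Eventually.of_forall fun x => ?_)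
    simp_rw [mul_assoc]
    rw [integral_const_mul]; rfl
  have h2 : IGMINEDV μX μZ p q T ≤ IBALT μX μZ p q T := by
    have hle : ∀ᵐ x ∂μX,
        pX μZ p x * log (ZT μZ q T x)
          ≤ pX μZ p x * (log c - 1) + pX μZ p x * ZT μZ q T x / c := by
      filter_upwards [hpX_nn, hZT_pos] with x h0 hz
      have h2' := Real.log_le_sub_one_of_pos (div_pos hz hZTtot_pos)
      rw [Real.log_div hz.ne' hZTtot_pos.ne'] at h2'
      have h3 : log (ZT μZ q T x) ≤ log c - 1 + ZT μZ q T x / c := by linarith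
      calc pX μZ p x * log (ZT μZ q T x)
          ≤ pX μZ p x * (log c - 1 + ZT μZ q T x / c) :=
            mul_le_mul_of_nonneg_left h3 h0
        _ = pX μZ p x * (log c - 1) + pX μZ p x * ZT μZ q T x / c := by ring
    have hint2 : Integrable
        (fun x => pX μZ p x * (log c - 1) + pX μZ p x * ZT μZ q T x / c) μX :=
      (hpX_int.mul_const _).add (hpXZT_int.div_const c)
    have hmono := integral_mono_ae h_int_pXlogZ hint2 hle
    rw [integral_add (hpX_int.mul_const _) (hpXZT_int.div_const c),
      integral_mul_const, integral_div, hpX_norm, ← hZTtot_eq, one_mul,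
      div_self hZTtot_pos.ne'] at hmono
    unfold IGMINEDV IBALT
    rw [← hc, ← hμ]
    linarith
  ---------------------------------------------------------------------------
  -- Part 3 : IBALT ≤ MI
  ---------------------------------------------------------------------------
  -- the function G w = p w * log (ZT w.1)
  have hG_meas : AEStronglyMeasurable (fun w : X × Z => p w * log (ZT μZ q T w.1)) μ :=
    (hp_meas.mul ((Real.measurable_log.comp hZT_meas).comp measurable_fst)).aestronglyMeasurable
  have hG_int : Integrable (fun w : X × Z => p w * log (ZT μZ q T w.1)) μ := by
    rw [hμ, integrable_prod_iff hG_meas]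
    constructor
    · filter_upwards [hp_int.prod_right_ae] with x hint
      exact hint.mul_const _
    · refine h_int_pXlogZ.abs.congr ?_
      filter_upwards [hp_sl] with x hpos
      have hnn : 0 ≤ᵐ[μZ] fun z => p (x, z) := hpos.mono fun z hz => hz.le
      have h1 : |pX μZ p x| = ∫ z, |p (x, z)| ∂μZ := by
        unfold pX
        rw [abs_of_nonneg (integral_nonneg_of_ae hnn)]
        exact integral_congr_ae (hnn.mono fun z hz => (abs_of_nonneg hz).symm)
      calc |pX μZ p x * log (ZT μZ q T x)|
          = (∫ z, |p (x, z)| ∂μZ) * |log (ZT μZ q T x)| := by rw [abs_mul, h1]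
        _ = ∫ z, |p (x, z)| * |log (ZT μZ q T x)| ∂μZ := (integral_mul_const _ _).symm
        _ = ∫ z, ‖p (x, z) * log (ZT μZ q T x)‖ ∂μZ := by
            refine integral_congr_ae (Filter.Eventually.of_forall fun z => ?_)
            simp [Real.norm_eq_abs, abs_mul]
  have hG_eq : (∫ w, p w * log (ZT μZ q T w.1) ∂μ)
      = ∫ x, pX μZ p x * log (ZT μZ q T x) ∂μX := by
    rw [hμ, integral_prod _ hG_int]
    refine integral_congr_ae (Filter.Eventually.of_forall fun x => ?_)
    dsimp only
    rw [integral_mul_const]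
    rfl
  -- the tilted density s
  set s : X × Z → ℝ := fun w => pX μZ p w.1 / ZT μZ q T w.1 * (q w * exp (T w)) with hs_def
  have hs_meas : AEStronglyMeasurable s μ :=
    (((hpX_meas.comp measurable_fst).div (hZT_meas.comp measurable_fst)).mul
      (hq_meas.mul (Real.measurable_exp.comp hT_meas))).aestronglyMeasurable
  have hs_int : Integrable s μ := by
    rw [hμ, integrable_prod_iff hs_meas]
    constructor
    · filter_upwards [hZT_int] with x hint
      simp only [hs_def]
      exact hint.const_mul _
    · refine hpX_int.congr ?_
      filter_upwards [hZT_int, hZT_pos, hpX_nn, hq_sl] with x h1 h2 h3 h4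
      have hnn : 0 ≤ᵐ[μZ] fun z => q (x, z) * exp (T (x, z)) :=
        h4.mono fun z hz => by positivity
      have h5 : (∫ z, ‖q (x, z) * exp (T (x, z))‖ ∂μZ) = ZT μZ q T x :=
        integral_congr_ae (hnn.mono fun z hz => by
          simp only [Real.norm_eq_abs]
          exact abs_of_nonneg hz)
      calc pX μZ p x
          = pX μZ p x / ZT μZ q T x * ZT μZ q T x := by field_simp
        _ = |pX μZ p x / ZT μZ q T x| * ∫ z, ‖q (x, z) * exp (T (x, z))‖ ∂μZ := by
            rw [h5, abs_of_nonneg (by positivity)]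
        _ = ∫ z, |pX μZ p x / ZT μZ q T x| * ‖q (x, z) * exp (T (x, z))‖ ∂μZ :=
            (integral_const_mul _ _).symm
        _ = ∫ z, ‖s (x, z)‖ ∂μZ := by
            refine integral_congr_ae (Filter.Eventually.of_forall fun z => ?_)
            simp only [hs_def, Real.norm_eq_abs, abs_mul]
  have hs_norm : ∫ w, s w ∂μ = 1 := by
    rw [hμ, integral_prod _ hs_int]
    rw [← hpX_norm]
    refine integral_congr_ae ?_
    filter_upwards [hZT_pos] with x hz
    have hstep : (∫ z, s (x, z) ∂μZ) = pX μZ p x / ZT μZ q T x * ZT μZ q T x := by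
      simp only [hs_def]
      rw [integral_const_mul]
      rfl
    rw [hstep]
    field_simp
  -- log algebra : combining MI and IBAL integrands
  have hlog_eq : ∀ᵐ w ∂μ,
      p w * log (p w / (pX μZ p w.1 * pZ μX p w.2)) - p w * log (q w / pZ μX p w.2)
        = p w * log (p w / (pX μZ p w.1 * q w)) := by
    filter_upwards [hp_pos, hq_pos, hpXpos', hpZpos'] with w h1 h2 h3 h4
    rw [Real.log_div h1.ne' (by positivity), Real.log_div h2.ne' h4.ne',
      Real.log_div h1.ne' (by positivity), Real.log_mul h3.ne' h4.ne',
      Real.log_mul h3.ne' h2.ne']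
    ring
  have hKL_int : Integrable (fun w => p w * log (p w / (pX μZ p w.1 * q w))) μ :=
    (h_int_mi.sub h_int_ba).congr hlog_eq
  have hMIBA : MI μX μZ p - IBAL μX μZ p q
      = ∫ w, p w * log (p w / (pX μZ p w.1 * q w)) ∂μ := by
    rw [MI, IBAL, ← hμ, ← integral_sub h_int_mi h_int_ba]
    exact integral_congr_ae hlog_eq
  -- pointwise KL-type bound
  have hptwise : ∀ᵐ w ∂μ, p w - s w
      ≤ p w * log (p w / (pX μZ p w.1 * q w)) - p w * T w
        + p w * log (ZT μZ q T w.1) := by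
    filter_upwards [hp_pos, hq_pos, hpXpos', hZTpos'] with w h1 h2 h3 h4
    have hs_pos : 0 < s w := by rw [hs_def]; positivity
    have h6 := Real.log_le_sub_one_of_pos (div_pos hs_pos h1)
    have h7 : p w * log (s w / p w) ≤ s w - p w := by
      have := mul_le_mul_of_nonneg_left h6 h1.le
      calc p w * log (s w / p w) ≤ p w * (s w / p w - 1) := this
        _ = s w - p w := by field_simp
    have hlog_s : log (s w) = log (pX μZ p w.1) - log (ZT μZ q T w.1)
        + (log (q w) + T w) := by
      rw [hs_def]
      simp only
      rw [Real.log_mul (by positivity) (by positivity),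
        Real.log_div h3.ne' h4.ne', Real.log_mul h2.ne' (Real.exp_ne_zero _),
        Real.log_exp]
    rw [Real.log_div hs_pos.ne' h1.ne', hlog_s] at h7
    rw [Real.log_div h1.ne' (by positivity), Real.log_mul h3.ne' h2.ne']
    nlinarith [h7]
  have hKLT_int : Integrable
      (fun w => p w * log (p w / (pX μZ p w.1 * q w)) - p w * T w) μ :=
    hKL_int.sub h_int_pT
  have hRHS_int : Integrable (fun w => p w * log (p w / (pX μZ p w.1 * q w))
      - p w * T w + p w * log (ZT μZ q T w.1)) μ :=
    hKLT_int.add hG_int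
  have hmain := integral_mono_ae (hp_int.sub hs_int) hRHS_int hptwise
  simp only [Pi.sub_apply] at hmain
  rw [integral_sub hp_int hs_int, hs_norm,
    integral_add hKLT_int hG_int,
    integral_sub hKL_int h_int_pT, hG_eq, hp_norm] at hmain
  have h3 : IBALT μX μZ p q T ≤ MI μX μZ p := by
    unfold IBALT
    rw [← hμ]
    have hμ' : ∫ w, p w * T w ∂(μX.prod μZ) = ∫ w, p w * T w ∂μ := by rw [hμ]
    rw [hμ']
    linarith [hmain, hMIBA]
  exact ⟨h1, h2, h3⟩

end Stmt17
end
end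

section
/- (Probabilistic interpretation of the gap of Generalized MINE-DV.) For every measurable critic T : X × Z → ℝ (with 𝒵_T ∈ (0,∞)), I(x;z) − I_GMINE-DV(q,T) = ∫∫ p(x,z)·log( 𝒵_T·p(x,z)/(p_X(x)·q(z|x)·e^{T(x,z)}) ) dμ_Z dμ_X, i.e. the gap equals the Kullback–Leibler divergence from the energy-based joint density π_T(x,z) := (1/𝒵_T)·p_X(x)·q(z|x)·e^{T(x,z)} to p(x,z); in particular I_GMINE-DV(q,T) ≤ I(x;z). -/
open MeasureTheory Real

noncomputable section

namespace Stmt18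

variable {X Z : Type*} [MeasurableSpace X] [MeasurableSpace Z]

/-- Marginal density `p_X(x) = ∫ p(x,z) dμ_Z(z)`. -/
def pX (μZ : Measure Z) (p : X × Z → ℝ) (x : X) : ℝ := ∫ z, p (x, z) ∂μZ

/-- Marginal density `p_Z(z) = ∫ p(x,z) dμ_X(x)`. -/
def pZ (μX : Measure X) (p : X × Z → ℝ) (z : Z) : ℝ := ∫ x, p (x, z) ∂μX

/-- Mutual information `I(x;z)`. -/
def MI (μX : Measure X) (μZ : Measure Z) (p : X × Z → ℝ) : ℝ :=
  ∫ w, p w * log (p w / (pX μZ p w.1 * pZ μX p w.2)) ∂(μX.prod μZ)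

/-- Barber–Agakov lower bound `I_BA_L(q) = ∫∫ p(x,z) log(q(z|x)/p_Z(z))`. -/
def IBAL (μX : Measure X) (μZ : Measure Z) (p q : X × Z → ℝ) : ℝ :=
  ∫ w, p w * log (q w / pZ μX p w.2) ∂(μX.prod μZ)

/-- Joint partition function `𝒵_T = ∫∫ p_X(x) q(z|x) e^{T(x,z)}`. -/
def ZTtot (μX : Measure X) (μZ : Measure Z) (p q T : X × Z → ℝ) : ℝ :=
  ∫ w, pX μZ p w.1 * q w * exp (T w) ∂(μX.prod μZ)

/-- Generalized MINE-DV lower bound. -/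
def IGMINEDV (μX : Measure X) (μZ : Measure Z) (p q T : X × Z → ℝ) : ℝ :=
  IBAL μX μZ p q + (∫ w, p w * T w ∂(μX.prod μZ)) - log (ZTtot μX μZ p q T)

/-- Lift an a.e. property of the first coordinate to the product measure. -/
lemma ae_fst_prod {μX : Measure X} {μZ : Measure Z} [SigmaFinite μZ]
    {P : X → Prop} (hP : MeasurableSet {x | P x}) (h : ∀ᵐ x ∂μX, P x) :
    ∀ᵐ w ∂(μX.prod μZ), P w.1 := by
  rw [ae_iff] at h ⊢
  have hset : {w : X × Z | ¬ P w.1} = {x | ¬ P x} ×ˢ Set.univ := by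
    ext w; simp
  rw [hset, Measure.prod_prod, h, zero_mul]

/-- Lift an a.e. property of the second coordinate to the product measure. -/
lemma ae_snd_prod {μX : Measure X} {μZ : Measure Z} [SigmaFinite μZ]
    {P : Z → Prop} (hP : MeasurableSet {z | P z}) (h : ∀ᵐ z ∂μZ, P z) :
    ∀ᵐ w ∂(μX.prod μZ), P w.2 := by
  rw [ae_iff] at h ⊢
  have hset : {w : X × Z | ¬ P w.2} = Set.univ ×ˢ {z | ¬ P z} := by
    ext w; simp
  rw [hset, Measure.prod_prod, h, mul_zero]

/-- A positive a.e., integrable function over a nonzero measure has positive integral. -/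
lemma integral_pos_of_ae_pos {α : Type*} [MeasurableSpace α] {μ : Measure α}
    (hμ : μ ≠ 0) {f : α → ℝ} (hpos : ∀ᵐ a ∂μ, 0 < f a) (hint : Integrable f μ) :
    0 < ∫ a, f a ∂μ := by
  have h0 : 0 ≤ ∫ a, f a ∂μ := integral_nonneg_of_ae (hpos.mono fun a ha => ha.le)
  rcases h0.lt_or_eq with h | h
  · exact h
  · exfalso
    have hz := (integral_eq_zero_iff_of_nonneg_ae (hpos.mono fun a ha => ha.le) hint).mp h.symm
    have hfalse : ∀ᵐ a ∂μ, False := by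
      filter_upwards [hpos, hz] with a h1 h2
      rw [Pi.zero_apply] at h2
      exact absurd h2 (ne_of_gt h1)
    exact hμ (ae_eq_bot.mp (by simpa [Filter.eventually_false_iff_eq_bot] using hfalse))

/-- Probabilistic interpretation of the gap of Generalized MINE-DV: the gap is the
KL divergence from the energy-based joint density
`π_T(x,z) = p_X(x) q(z|x) e^{T(x,z)} / 𝒵_T` to `p(x,z)`. -/
theorem gmine_dv_gap
    (μX : Measure X) (μZ : Measure Z) [SigmaFinite μX] [SigmaFinite μZ]
    (p q T : X × Z → ℝ)
    (hp_meas : Measurable p)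
    (hp_pos : ∀ᵐ w ∂(μX.prod μZ), 0 < p w)
    (hp_int : Integrable p (μX.prod μZ))
    (hp_norm : ∫ w, p w ∂(μX.prod μZ) = 1)
    (hq_meas : Measurable q)
    (hq_pos : ∀ᵐ w ∂(μX.prod μZ), 0 < q w)
    (hq_norm : ∀ x, ∫ z, q (x, z) ∂μZ = 1)
    (hT_meas : Measurable T)
    (hZTtot_int : Integrable (fun w => pX μZ p w.1 * q w * exp (T w)) (μX.prod μZ))
    (hZTtot_pos : 0 < ZTtot μX μZ p q T)
    (h_int_mi : Integrable (fun w => p w * log (p w / (pX μZ p w.1 * pZ μX p w.2)))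
      (μX.prod μZ))
    (h_int_ba : Integrable (fun w => p w * log (q w / pZ μX p w.2)) (μX.prod μZ))
    (h_int_pT : Integrable (fun w => p w * T w) (μX.prod μZ))
    (h_int_gap : Integrable
      (fun w => p w * log (ZTtot μX μZ p q T * p w / (pX μZ p w.1 * q w * exp (T w))))
      (μX.prod μZ)) :
    MI μX μZ p - IGMINEDV μX μZ p q T
        = ∫ w, p w * log (ZTtot μX μZ p q T * p w / (pX μZ p w.1 * q w * exp (T w)))
            ∂(μX.prod μZ) ∧
    IGMINEDV μX μZ p q T ≤ MI μX μZ p := by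
  set Zc := ZTtot μX μZ p q T with hZcdef
  -- the product measure is nonzero
  have hμprod : μX.prod μZ ≠ 0 := by
    intro h
    rw [hZcdef, ZTtot, h, integral_zero_measure] at hZTtot_pos
    exact lt_irrefl 0 hZTtot_pos
  have hμX : μX ≠ 0 := by
    intro h; exact hμprod (by rw [h, Measure.zero_prod])
  have hμZ : μZ ≠ 0 := by
    intro h; exact hμprod (by rw [h, Measure.prod_zero])
  -- measurability of marginals
  have hpX_meas : Measurable (pX μZ p) :=
    (StronglyMeasurable.integral_prod_right' hp_meas.stronglyMeasurable).measurable
  have hpZ_meas : Measurable (pZ μX p) := by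
    have : Measurable (fun w : Z × X => p (w.2, w.1)) := hp_meas.comp measurable_swap
    exact (StronglyMeasurable.integral_prod_right' this.stronglyMeasurable).measurable
  -- a.e. positivity of pX
  have hpX_pos : ∀ᵐ x ∂μX, 0 < pX μZ p x := by
    have h1 : ∀ᵐ x ∂μX, Integrable (fun z => p (x, z)) μZ := hp_int.prod_right_ae
    have h2 : ∀ᵐ x ∂μX, ∀ᵐ z ∂μZ, 0 < p (x, z) := Measure.ae_ae_of_ae_prod hp_pos
    filter_upwards [h1, h2] with x hint hpos
    exact integral_pos_of_ae_pos hμZ hpos hint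
  -- a.e. positivity of pZ
  have hp_pos_swap : ∀ᵐ w ∂(μZ.prod μX), 0 < p (w.2, w.1) := by
    have hmeas : MeasurableSet {w : Z × X | ¬ 0 < p (w.2, w.1)} := by
      have : Measurable (fun w : Z × X => p (w.2, w.1)) := hp_meas.comp measurable_swap
      exact (measurableSet_lt measurable_const this).compl
    rw [ae_iff]
    have hmap : μZ.prod μX = Measure.map Prod.swap (μX.prod μZ) :=
      (Measure.prod_swap).symm
    rw [hmap, Measure.map_apply measurable_swap hmeas]
    have : Prod.swap ⁻¹' {w : Z × X | ¬ 0 < p (w.2, w.1)} = {w : X × Z | ¬ 0 < p w} := by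
      ext w; simp [Prod.swap]
    rw [this]
    exact ae_iff.mp hp_pos
  have hpZ_pos : ∀ᵐ z ∂μZ, 0 < pZ μX p z := by
    have h1 : ∀ᵐ z ∂μZ, Integrable (fun x => p (x, z)) μX :=
      hp_int.prod_left_ae
    have h2 : ∀ᵐ z ∂μZ, ∀ᵐ x ∂μX, 0 < p (x, z) :=
      Measure.ae_ae_of_ae_prod hp_pos_swap
    filter_upwards [h1, h2] with z hint hpos
    exact integral_pos_of_ae_pos hμX hpos hint
  -- lift to product measure
  have hpX_pos' : ∀ᵐ w ∂(μX.prod μZ), 0 < pX μZ p w.1 :=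
    ae_fst_prod (measurableSet_lt measurable_const hpX_meas) hpX_pos
  have hpZ_pos' : ∀ᵐ w ∂(μX.prod μZ), 0 < pZ μX p w.2 :=
    ae_snd_prod (measurableSet_lt measurable_const hpZ_meas) hpZ_pos
  -- key pointwise identity
  have key : ∀ᵐ w ∂(μX.prod μZ),
      p w * log (Zc * p w / (pX μZ p w.1 * q w * exp (T w)))
        = p w * log (p w / (pX μZ p w.1 * pZ μX p w.2))
          - p w * log (q w / pZ μX p w.2) - p w * T w + p w * log Zc := by
    filter_upwards [hp_pos, hq_pos, hpX_pos', hpZ_pos'] with w hp hq hpX hpZ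
    have hZc : Zc ≠ 0 := ne_of_gt hZTtot_pos
    have he : exp (T w) ≠ 0 := (exp_pos _).ne'
    rw [log_div (by positivity) (by positivity),
        log_mul hZc hp.ne', log_mul (by positivity) he,
        log_mul hpX.ne' hq.ne', log_exp,
        log_div hp.ne' (by positivity), log_mul hpX.ne' hpZ.ne',
        log_div hq.ne' hpZ.ne']
    ring
  -- the equality
  have heq : MI μX μZ p - IGMINEDV μX μZ p q T
      = ∫ w, p w * log (Zc * p w / (pX μZ p w.1 * q w * exp (T w))) ∂(μX.prod μZ) := by
    have hrw : ∫ w, p w * log (Zc * p w / (pX μZ p w.1 * q w * exp (T w))) ∂(μX.prod μZ)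
        = ∫ w, (p w * log (p w / (pX μZ p w.1 * pZ μX p w.2))
            - p w * log (q w / pZ μX p w.2) - p w * T w + p w * log Zc) ∂(μX.prod μZ) :=
      integral_congr_ae key
    rw [hrw]
    have hI1 : Integrable (fun w => p w * log (p w / (pX μZ p w.1 * pZ μX p w.2))
        - p w * log (q w / pZ μX p w.2)) (μX.prod μZ) := h_int_mi.sub h_int_ba
    have hI2 : Integrable (fun w => p w * log (p w / (pX μZ p w.1 * pZ μX p w.2))
        - p w * log (q w / pZ μX p w.2) - p w * T w) (μX.prod μZ) := hI1.sub h_int_pT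
    have hI3 : Integrable (fun w => p w * log Zc) (μX.prod μZ) := hp_int.mul_const _
    have hI4 : Integrable (fun (w : X × Z) => p w - pX μZ p w.1 * q w * exp (T w) / Zc)
        (μX.prod μZ) := hp_int.sub (hZTtot_int.div_const Zc)
    have e1 : ∫ w, (p w * log (p w / (pX μZ p w.1 * pZ μX p w.2))
          - p w * log (q w / pZ μX p w.2) - p w * T w + p w * log Zc) ∂(μX.prod μZ)
        = (∫ w, (p w * log (p w / (pX μZ p w.1 * pZ μX p w.2))
            - p w * log (q w / pZ μX p w.2) - p w * T w) ∂(μX.prod μZ))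
          + ∫ w, p w * log Zc ∂(μX.prod μZ) := integral_add hI2 hI3
    have e2 : ∫ w, (p w * log (p w / (pX μZ p w.1 * pZ μX p w.2))
          - p w * log (q w / pZ μX p w.2) - p w * T w) ∂(μX.prod μZ)
        = (∫ w, (p w * log (p w / (pX μZ p w.1 * pZ μX p w.2))
            - p w * log (q w / pZ μX p w.2)) ∂(μX.prod μZ))
          - ∫ w, p w * T w ∂(μX.prod μZ) := integral_sub hI1 h_int_pT
    have e3 : ∫ w, (p w * log (p w / (pX μZ p w.1 * pZ μX p w.2))
          - p w * log (q w / pZ μX p w.2)) ∂(μX.prod μZ)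
        = (∫ w, p w * log (p w / (pX μZ p w.1 * pZ μX p w.2)) ∂(μX.prod μZ))
          - ∫ w, p w * log (q w / pZ μX p w.2) ∂(μX.prod μZ) := integral_sub h_int_mi h_int_ba
    have e4 : ∫ w, p w * log Zc ∂(μX.prod μZ) = (∫ w, p w ∂(μX.prod μZ)) * log Zc :=
      integral_mul_const _ _
    rw [e1, e2, e3, e4, hp_norm, one_mul]
    rw [MI, IGMINEDV, IBAL]
    ring
  refine ⟨heq, ?_⟩
  -- nonnegativity of the gap (KL divergence is nonnegative)
  have hle : ∀ᵐ w ∂(μX.prod μZ),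
      p w - pX μZ p w.1 * q w * exp (T w) / Zc
        ≤ p w * log (Zc * p w / (pX μZ p w.1 * q w * exp (T w))) := by
    filter_upwards [hp_pos, hq_pos, hpX_pos'] with w hp hq hpX
    set a := p w
    set b := pX μZ p w.1 * q w * exp (T w) / Zc with hb
    have hbpos : 0 < b := by
      apply div_pos (by positivity) hZTtot_pos
    have hab : Zc * a / (pX μZ p w.1 * q w * exp (T w)) = a / b := by
      rw [hb]; field_simp
    rw [hab]
    have h1 : log (b / a) ≤ b / a - 1 := Real.log_le_sub_one_of_pos (div_pos hbpos hp)
    have h2 : log (a / b) = - log (b / a) := by rw [← log_inv, inv_div]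
    rw [h2]
    have h3 := mul_le_mul_of_nonneg_left h1 hp.le
    have h4 : a * (b / a) = b := by field_simp
    nlinarith
  have hZero : ∫ w, (p w - pX μZ p w.1 * q w * exp (T w) / Zc) ∂(μX.prod μZ) = 0 := by
    have e5 : ∫ w, (p w - pX μZ p w.1 * q w * exp (T w) / Zc) ∂(μX.prod μZ)
        = (∫ w, p w ∂(μX.prod μZ))
          - ∫ w, pX μZ p w.1 * q w * exp (T w) / Zc ∂(μX.prod μZ) :=
      integral_sub hp_int (hZTtot_int.div_const Zc)
    have e6 : ∫ w, pX μZ p w.1 * q w * exp (T w) / Zc ∂(μX.prod μZ)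
        = (∫ w, pX μZ p w.1 * q w * exp (T w) ∂(μX.prod μZ)) / Zc := integral_div _ _
    rw [e5, e6, hp_norm]
    rw [show (∫ w, pX μZ p w.1 * q w * exp (T w) ∂(μX.prod μZ)) = Zc from rfl]
    rw [div_self (ne_of_gt hZTtot_pos)]
    ring
  have hgap_nonneg : 0 ≤ ∫ w, p w * log (Zc * p w / (pX μZ p w.1 * q w * exp (T w)))
      ∂(μX.prod μZ) := by
    rw [← hZero]
    refine integral_mono_ae ?_ h_int_gap hle
    exact hp_int.sub (hZTtot_int.div_const Zc)
  linarith [heq ▸ hgap_nonneg]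

end Stmt18
end
end
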